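/- arXiv:math/0402442 — 12 statements merged into one kernel-verified Lean document; each statement's English description precedes it below -/
import Mathlib

section
/- Let X be a separable metrizable topological space without isolated points. Then X is meager in itself if and only if there exists a countable dense subset D of X that is a Gδ subset of X. -/
open Set TopologicalSpace

private lemma dense_biInter_finset {α : Type*} [TopologicalSpace α] (s : Finset ℕ)
    (g : ℕ → Set α) (ho : ∀ k, IsOpen (g k)) (hd : ∀ k, Dense (g k)) :
    Dense (⋂ k ∈ s, g k) := by
  classical
  refine Finset.induction_on s (by simp) ?_
  intro a t _ ih
  rw [Finset.set_biInter_insert]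
  exact (hd a).inter_of_isOpen_left ih (ho a)

private lemma singleton_isNowhereDense {α : Type*} [TopologicalSpace α] [T1Space α]
    {x : α} (h : ¬ IsOpen ({x} : Set α)) : IsNowhereDense ({x} : Set α) := by
  rw [IsNowhereDense, closure_singleton]
  rcases Set.eq_empty_or_nonempty (interior ({x} : Set α)) with he | hne
  · exact he
  · have hi : interior ({x} : Set α) = {x} :=
      hne.subset_singleton_iff.mp interior_subset
    exact absurd (hi ▸ isOpen_interior) h

/-- A separable metrizable space without isolated points is meager in itself iff
it has a countable dense `Gδ` subset. -/
theorem meagre_in_itself_iff_countable_dense_Gdelta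
    (X : Type*) [TopologicalSpace X] [TopologicalSpace.MetrizableSpace X]
    [TopologicalSpace.SeparableSpace X]
    (hiso : ∀ x : X, ¬ IsOpen ({x} : Set X)) :
    IsMeagre (Set.univ : Set X) ↔
      ∃ D : Set X, D.Countable ∧ Dense D ∧ IsGδ D := by
  letI : MetricSpace X := TopologicalSpace.metrizableSpaceMetric X
  haveI : SecondCountableTopology X := UniformSpace.secondCountable_of_separable X
  constructor
  · intro hm
    cases isEmpty_or_nonempty X with
    | inl h =>
      refine ⟨∅, Set.countable_empty, ?_, IsGδ.empty⟩
      rw [dense_iff_closure_eq, closure_empty, Set.univ_eq_empty_iff.mpr h]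
    | inr h =>
      obtain ⟨S, hND, hSc, hcov⟩ := isMeagre_iff_countable_union_isNowhereDense.mp hm
      obtain ⟨f, hf⟩ := (hSc.insert ∅).exists_eq_range (Set.insert_nonempty _ _)
      have hfnd : ∀ n, IsNowhereDense (f n) := by
        intro n
        have hmem : f n ∈ insert ∅ S := hf ▸ Set.mem_range_self n
        rcases hmem with h | h
        · rw [h]; exact isNowhereDense_empty
        · exact hND _ h
      set G : ℕ → Set X := fun n => ⋃ k ∈ Finset.range (n + 1), closure (f k) with hGdef
      have hGclosed : ∀ n, IsClosed (G n) :=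
        fun n => isClosed_biUnion_finset fun k _ => isClosed_closure
      have hGdense : ∀ n, Dense (G n)ᶜ := by
        intro n
        have : (G n)ᶜ = ⋂ k ∈ Finset.range (n + 1), (closure (f k))ᶜ := by
          simp [hGdef, Set.compl_iUnion]
        rw [this]
        exact dense_biInter_finset _ _ (fun k => isClosed_closure.isOpen_compl)
          (fun k => interior_eq_empty_iff_dense_compl.mp (hfnd k))
      have hGmono : ∀ {m n : ℕ}, m ≤ n → G m ⊆ G n := by
        intro m n hmn x hx
        simp only [hGdef, Set.mem_iUnion, Finset.mem_range] at hx ⊢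
        obtain ⟨k, hk, hxk⟩ := hx
        exact ⟨k, by omega, hxk⟩
      have hGcov : ∀ x : X, ∃ n, x ∈ G n := by
        intro x
        obtain ⟨t, htS, hxt⟩ := hcov (Set.mem_univ x)
        have : t ∈ Set.range f := by rw [← hf]; exact Set.mem_insert_of_mem _ htS
        obtain ⟨k, rfl⟩ := this
        refine ⟨k, ?_⟩
        simp only [hGdef, Set.mem_iUnion, Finset.mem_range]
        exact ⟨k, by omega, subset_closure hxt⟩
      -- countable basis
      obtain ⟨b, hbc, hbne, hbB⟩ := TopologicalSpace.exists_countable_basis X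
      obtain ⟨x0⟩ := h
      obtain ⟨o, hob, -, -⟩ := hbB.exists_subset_of_mem_open (Set.mem_univ x0) isOpen_univ
      obtain ⟨e, he⟩ := hbc.exists_eq_range ⟨o, hob⟩
      have heb : ∀ i, e i ∈ b := fun i => he ▸ Set.mem_range_self i
      have hene : ∀ i, (e i).Nonempty := by
        intro i
        rcases Set.eq_empty_or_nonempty (e i) with hE | hE
        · exact absurd (hE ▸ heb i) hbne
        · exact hE
      have hpick : ∀ i, ∃ x, x ∈ e i ∩ (G i)ᶜ :=
        fun i => (hGdense i).inter_open_nonempty _ (hbB.isOpen (heb i)) (hene i)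
      choose d hd using hpick
      refine ⟨Set.range d, Set.countable_range d, ?_, ?_⟩
      · rw [hbB.dense_iff]
        intro u hub hune
        rw [he] at hub
        obtain ⟨i, rfl⟩ := hub
        exact ⟨d i, (hd i).1, Set.mem_range_self i⟩
      · have hDG : ∀ n, (Set.range d ∩ G n) ⊆ d '' Set.Iio n := by
          intro n x hx
          obtain ⟨⟨i, rfl⟩, hxg⟩ := hx
          refine ⟨i, Set.mem_Iio.mpr ?_, rfl⟩
          by_contra hni
          push_neg at hni
          exact (hd i).2 (hGmono hni hxg)
        have key : Set.range d = ⋂ n, ((G n)ᶜ ∪ (Set.range d ∩ G n)) := by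
          ext x
          simp only [Set.mem_iInter, Set.mem_union, Set.mem_inter_iff, Set.mem_compl_iff]
          constructor
          · intro hx n
            by_cases hg : x ∈ G n
            · exact Or.inr ⟨hx, hg⟩
            · exact Or.inl hg
          · intro hx
            obtain ⟨n, hn⟩ := hGcov x
            rcases hx n with h' | h'
            · exact absurd hn h'
            · exact h'.1
        rw [key]
        refine IsGδ.iInter fun n => IsGδ.union ((hGclosed n).isOpen_compl.isGδ) ?_
        have hfin : (Set.range d ∩ G n).Finite :=
          Set.Finite.subset ((Set.finite_Iio n).image d) (hDG n)
        exact hfin.isClosed.isGδ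
  · rintro ⟨D, hDc, hDd, hDg⟩
    have h1 : IsMeagre Dᶜ := by
      rw [IsMeagre, compl_compl]
      exact residual_of_dense_Gδ hDg hDd
    have h2 : IsMeagre D := by
      rw [isMeagre_iff_countable_union_isNowhereDense]
      refine ⟨(fun x => ({x} : Set X)) '' D, ?_, hDc.image _, ?_⟩
      · rintro t ⟨x, -, rfl⟩
        exact singleton_isNowhereDense (hiso x)
      · intro x hx
        exact ⟨{x}, ⟨x, hx, rfl⟩, rfl⟩
    rw [IsMeagre, Set.compl_univ]
    have he : (∅ : Set X) = Dᶜ ∩ Dᶜᶜ := by simp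
    rw [he]
    exact Filter.inter_mem h2 h1
end

section
/- Let X be a separable metrizable topological space that is countable dense homogeneous. Then the set of isolated points of X is a clopen subset of X. -/
/-- A topological space is countable dense homogeneous (CDH) if for any two countable
dense subsets `D`, `D'` there is a self-homeomorphism taking `D` onto `D'`. -/
def IsCDH (X : Type*) [TopologicalSpace X] : Prop :=
  ∀ D D' : Set X, D.Countable → Dense D → D'.Countable → Dense D' →
    ∃ h : X ≃ₜ X, h '' D = D'

lemma homeo_isolated {X : Type*} [TopologicalSpace X] (h : X ≃ₜ X) (y : X)
    (hy : IsOpen ({y} : Set X)) : IsOpen ({h y} : Set X) := by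
  have := h.isOpenMap _ hy
  rwa [Set.image_singleton] at this

/-- In a separable metrizable CDH space the set of isolated points is clopen. -/
theorem isClopen_isolatedPoints_of_CDH
    (X : Type*) [TopologicalSpace X] [TopologicalSpace.MetrizableSpace X]
    [TopologicalSpace.SeparableSpace X] (hX : IsCDH X) :
    IsClopen {x : X | IsOpen ({x} : Set X)} := by
  set I : Set X := {x : X | IsOpen ({x} : Set X)} with hI
  have hIopen : IsOpen I := by
    rw [isOpen_iff_forall_mem_open]
    intro x hx
    exact ⟨{x}, by simpa using hx, hx, rfl⟩
  refine ⟨?_, hIopen⟩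
  -- closedness: closure I ⊆ I
  rw [← closure_subset_iff_isClosed]
  by_contra hcon
  rw [Set.not_subset] at hcon
  obtain ⟨x, hxcl, hxI⟩ := hcon
  obtain ⟨D0, hD0c, hD0d⟩ := TopologicalSpace.exists_countable_dense X
  have hID0 : I ⊆ D0 := by
    intro y hy
    have := hD0d.inter_open_nonempty {y} hy (Set.singleton_nonempty y)
    obtain ⟨z, hz1, hz2⟩ := this
    rwa [Set.mem_singleton_iff.mp hz1] at hz2
  set D' : Set X := I ∪ (D0 \ closure I) with hD'
  have hD'c : D'.Countable := ((hD0c.mono hID0).union (hD0c.mono Set.diff_subset))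
  have hD'd : Dense D' := by
    rw [dense_iff_inter_open]
    intro U hU hUne
    by_cases hcase : (U ∩ (closure I)ᶜ).Nonempty
    · have hopen : IsOpen (U ∩ (closure I)ᶜ) := hU.inter isClosed_closure.isOpen_compl
      obtain ⟨z, hz1, hz2⟩ := hD0d.inter_open_nonempty _ hopen hcase
      exact ⟨z, ⟨hz1.1, Or.inr ⟨hz2, hz1.2⟩⟩⟩
    · obtain ⟨u, hu⟩ := hUne
      have huc : u ∈ closure I := by
        by_contra huc
        exact hcase ⟨u, hu, huc⟩
      obtain ⟨z, hz1, hz2⟩ := (mem_closure_iff.mp huc) U hU hu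
      exact ⟨z, hz1, Or.inl hz2⟩
  set D : Set X := insert x D' with hD
  have hDc : D.Countable := hD'c.insert x
  have hDd : Dense D := hD'd.mono (Set.subset_insert x D')
  obtain ⟨h, hh⟩ := hX D D' hDc hDd hD'c hD'd
  have hhx : h x ∈ D' := by
    rw [← hh]; exact ⟨x, Set.mem_insert x D', rfl⟩
  -- h maps I onto I
  have hIim : h '' I = I := by
    apply Set.Subset.antisymm
    · rintro _ ⟨y, hy, rfl⟩
      exact homeo_isolated h y hy
    · intro y hy
      refine ⟨h.symm y, homeo_isolated h.symm y hy, h.apply_symm_apply y⟩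
  have hhxcl : h x ∈ closure I := by
    have : h '' closure I = closure I := by rw [h.image_closure, hIim]
    rw [← this]
    exact ⟨x, hxcl, rfl⟩
  have hhxI : h x ∉ I := by
    intro hmem
    apply hxI
    have := homeo_isolated h.symm (h x) hmem
    rwa [h.symm_apply_apply] at this
  rcases hhx with hmem | ⟨_, hmem⟩
  · exact hhxI hmem
  · exact hmem hhxcl
end

section
/- Let X be a separable metrizable topological space that is countable dense homogeneous, and let I be the set of isolated points of X. Then there exist open subsets L and R of X such that I, L, R are pairwise disjoint, X = I ∪ L ∪ R, the subspace L is locally compact and has no isolated points, and every compact subset of the subspace R has empty interior in R. -/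
open Set Topology

section

variable {X Y : Type*} [TopologicalSpace X] [TopologicalSpace Y]

theorem IsCDH.isClosed_of_isOpen_of_forall_mapsTo [TopologicalSpace.SeparableSpace X]
    (hX : IsCDH X) {S : Set X} (hS : IsOpen S) (hinv : ∀ h : X ≃ₜ X, MapsTo h S S) :
    IsClosed S := by
  by_contra hSc
  obtain ⟨x, hxS, hx⟩ : ∃ x ∉ S, x ∈ frontier S := by
    obtain ⟨x, hxcl, hxS⟩ := not_subset.1 (closure_subset_iff_isClosed.not.2 hSc)
    exact ⟨x, hxS, hS.frontier_eq ▸ ⟨hxcl, hxS⟩⟩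
  have frontier_invariant (h : X ≃ₜ X) {y : X} (hy : y ∈ frontier S) : h y ∈ frontier S := by
    rw [hS.frontier_eq] at hy ⊢
    refine ⟨image_closure_subset_closure_image h.continuous ⟨y, hy.1, rfl⟩ |>
      closure_mono (image_subset_iff.2 (hinv h)), fun hhy => hy.2 ?_⟩
    simpa using hinv h.symm hhy
  obtain ⟨D₀, hD₀c, hD₀d⟩ := TopologicalSpace.exists_countable_dense X
  have hfrontier : Dense (frontier S)ᶜ := by
    rw [← interior_eq_empty_iff_dense_compl, ← frontier_compl]
    exact interior_frontier hS.isClosed_compl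
  have hDd : Dense (D₀ \ frontier S) :=
    hD₀d.inter_of_isOpen_right hfrontier isClosed_frontier.isOpen_compl
  obtain ⟨h, hh⟩ := hX _ _ ((hD₀c.mono sdiff_subset).insert x)
    (hDd.mono (subset_insert x _)) (hD₀c.mono sdiff_subset) hDd
  have hhx : h x ∈ D₀ \ frontier S := hh ▸ mem_image_of_mem h (mem_insert x _)
  exact hhx.2 (frontier_invariant h hx)

theorem isOpen_setOf_isOpen_singleton : IsOpen {x : X | IsOpen ({x} : Set X)} :=
  isOpen_iff_forall_mem_open.2 fun x hx => ⟨{x}, singleton_subset_iff.2 hx, hx, rfl⟩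

theorem Homeomorph.mapsTo_setOf_isOpen_singleton (h : X ≃ₜ Y) :
    MapsTo h {x : X | IsOpen ({x} : Set X)} {y : Y | IsOpen ({y} : Set Y)} := fun x hx => by
  simpa only [mem_ofPred_eq, image_singleton] using h.isOpenMap _ hx

def locallyCompactLocus (X : Type*) [TopologicalSpace X] : Set X :=
  {x | ∃ K, IsCompact K ∧ K ∈ 𝓝 x}

theorem isOpen_locallyCompactLocus : IsOpen (locallyCompactLocus X) := by
  refine isOpen_iff_mem_nhds.2 fun x ⟨K, hK, hKx⟩ => ?_
  filter_upwards [eventually_eventually_nhds.2 hKx] with y hy using ⟨K, hK, hy⟩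

theorem Homeomorph.mapsTo_locallyCompactLocus (h : X ≃ₜ Y) :
    MapsTo h (locallyCompactLocus X) (locallyCompactLocus Y) := fun x ⟨K, hK, hKx⟩ =>
  ⟨h '' K, hK.image h.continuous, h.map_nhds_eq x ▸ Filter.image_mem_map hKx⟩

theorem setOf_isOpen_singleton_subset_locallyCompactLocus :
    {x : X | IsOpen ({x} : Set X)} ⊆ locallyCompactLocus X :=
  fun x hx => ⟨{x}, isCompact_singleton, hx.mem_nhds rfl⟩

theorem IsOpen.locallyCompactSpace_of_subset_locallyCompactLocus [RegularSpace X] {U : Set X}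
    (hU : IsOpen U) (hUG : U ⊆ locallyCompactLocus X) : LocallyCompactSpace U := by
  suffices WeaklyLocallyCompactSpace U from inferInstance
  refine ⟨fun x => ?_⟩
  obtain ⟨K, hK, hKx⟩ := hUG x.2
  obtain ⟨C, hCx, hCc, hCKU⟩ := exists_mem_nhds_isClosed_subset (Filter.inter_mem hKx
    (hU.mem_nhds x.2))
  refine ⟨Subtype.val ⁻¹' C, ?_, continuous_subtype_val.continuousAt.preimage_mem_nhds hCx⟩
  refine IsInducing.subtypeVal.isCompact_preimage' (hK.of_isClosed_subset hCc
    fun y hy => (hCKU hy).1) ?_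
  rw [Subtype.range_coe]
  exact fun y hy => (hCKU hy).2

theorem IsOpen.interior_eq_empty_of_isCompact_of_disjoint_locallyCompactLocus {U : Set X}
    (hU : IsOpen U) (hUG : Disjoint U (locallyCompactLocus X)) {K : Set U} (hK : IsCompact K) :
    interior K = ∅ := by
  refine eq_empty_of_forall_notMem fun x hx => disjoint_left.1 hUG x.2 ?_
  refine ⟨Subtype.val '' K, hK.image continuous_subtype_val, Filter.mem_of_superset ?_
    (image_mono interior_subset)⟩
  exact (hU.isOpenMap_subtype_val _ isOpen_interior).mem_nhds ⟨x, hx, rfl⟩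

theorem IsOpen.not_isOpen_singleton_of_disjoint {U : Set X} (hU : IsOpen U)
    (hUI : Disjoint U {x : X | IsOpen ({x} : Set X)}) (x : U) : ¬ IsOpen ({x} : Set U) :=
  fun hx => disjoint_left.1 hUI x.2 (by simpa using hU.isOpenMap_subtype_val _ hx)

end

/-- Decomposition of a separable metrizable CDH space: `X = I ⊕ L ⊕ R` where `I` is the
set of isolated points, `L` is locally compact without isolated points, and every compact
subset of `R` has empty interior in `R`. -/
theorem CDH_decomposition
    (X : Type*) [TopologicalSpace X] [TopologicalSpace.MetrizableSpace X]
    [TopologicalSpace.SeparableSpace X] (hX : IsCDH X) :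
    ∃ L R : Set X, IsOpen L ∧ IsOpen R ∧
      Disjoint {x : X | IsOpen ({x} : Set X)} L ∧
      Disjoint {x : X | IsOpen ({x} : Set X)} R ∧
      Disjoint L R ∧
      {x : X | IsOpen ({x} : Set X)} ∪ L ∪ R = Set.univ ∧
      LocallyCompactSpace ↥L ∧
      (∀ x : ↥L, ¬ IsOpen ({x} : Set ↥L)) ∧
      (∀ K : Set ↥R, IsCompact K → interior K = ∅) := by
  set I := {x : X | IsOpen ({x} : Set X)}
  set G := locallyCompactLocus X
  have hIG : I ⊆ G := setOf_isOpen_singleton_subset_locallyCompactLocus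
  have hIc : IsClosed I := hX.isClosed_of_isOpen_of_forall_mapsTo isOpen_setOf_isOpen_singleton
    fun h => h.mapsTo_setOf_isOpen_singleton
  have hGc : IsClosed G := hX.isClosed_of_isOpen_of_forall_mapsTo isOpen_locallyCompactLocus
    fun h => h.mapsTo_locallyCompactLocus
  have hL : IsOpen (G \ I) := isOpen_locallyCompactLocus.sdiff hIc
  refine ⟨G \ I, Gᶜ, hL, hGc.isOpen_compl, disjoint_sdiff_right,
    disjoint_compl_right.mono_left hIG, disjoint_compl_right.mono_left sdiff_subset, ?_,
    hL.locallyCompactSpace_of_subset_locallyCompactLocus sdiff_subset,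
    hL.not_isOpen_singleton_of_disjoint disjoint_sdiff_left,
    fun K => hGc.isOpen_compl.interior_eq_empty_of_isCompact_of_disjoint_locallyCompactLocus
      disjoint_compl_left⟩
  rw [union_sdiff_self, union_eq_right.2 hIG, union_compl_self]
end

section
/- Let P be a Polish space and let X ⊆ P be an analytic set such that the subspace X has no isolated points and is countable dense homogeneous. Then every nonempty open subset of the subspace X is uncountable. -/
/-- In an analytic CDH subspace of a Polish space without isolated points, every nonempty
open subset is uncountable. -/
theorem uncountable_open_of_analytic_CDH
    (P : Type*) [TopologicalSpace P] [PolishSpace P] (X : Set P)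
    (hA : MeasureTheory.AnalyticSet X)
    (hiso : ∀ x : ↥X, ¬ IsOpen ({x} : Set ↥X))
    (hCDH : IsCDH ↥X) :
    ∀ U : Set ↥X, IsOpen U → U.Nonempty → ¬ U.Countable := by
  classical
  intro U hUopen hUne hUc
  -- `W` is the union of all countable open subsets of `X`.
  set S : Set (Set ↥X) := {V | IsOpen V ∧ V.Countable} with hS
  set W : Set ↥X := ⋃₀ S with hW
  have hWopen : IsOpen W := isOpen_sUnion (fun V hV => hV.1)
  have hWc : W.Countable := by
    obtain ⟨T, hTc, hTS, hTeq⟩ := TopologicalSpace.isOpen_sUnion_countable S (fun V hV => hV.1)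
    rw [hW, ← hTeq, Set.sUnion_eq_biUnion]
    exact hTc.biUnion (fun V hV => (hTS hV).2)
  -- `W` is invariant under every self-homeomorphism.
  have hWinv : ∀ h : ↥X ≃ₜ ↥X, h '' W = W := by
    have key : ∀ h : ↥X ≃ₜ ↥X, h '' W ⊆ W := by
      intro h x hx
      obtain ⟨y, hy, rfl⟩ := hx
      obtain ⟨V, hV, hyV⟩ := hy
      exact ⟨h '' V, ⟨(Homeomorph.isOpen_image h).2 hV.1, hV.2.image h⟩, ⟨y, hyV, rfl⟩⟩
    intro h
    refine subset_antisymm (key h) ?_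
    intro x hx
    have hx' : h.symm x ∈ W := key h.symm ⟨x, hx, rfl⟩
    exact ⟨h.symm x, hx', by simp⟩
  have hUW : U ⊆ W := Set.subset_sUnion_of_mem ⟨hUopen, hUc⟩
  obtain ⟨p, hp⟩ := hUne
  have hpW : p ∈ W := hUW hp
  -- A countable dense set containing `W`.
  obtain ⟨D₀, hD₀c, hD₀d⟩ := TopologicalSpace.exists_countable_dense ↥X
  set D : Set ↥X := D₀ ∪ W with hD
  have hDc : D.Countable := hD₀c.union hWc
  have hDd : Dense D := hD₀d.mono Set.subset_union_left
  haveI : Filter.NeBot (nhdsWithin p {p}ᶜ) := by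
    refine ⟨fun hbot => hiso p ?_⟩
    exact (isOpen_singleton_iff_punctured_nhds p).2 hbot
  have hD'c : (D \ {p}).Countable := hDc.mono Set.diff_subset
  have hD'd : Dense (D \ {p}) := hDd.diff_singleton p
  obtain ⟨h, hh⟩ := hCDH D (D \ {p}) hDc hDd hD'c hD'd
  -- `h '' W = W \ {p}` contradicts `h '' W = W`.
  have hWD : W ⊆ D := Set.subset_union_right
  have h1 : h '' W = W \ {p} := by
    have : h '' (D ∩ W) = (D \ {p}) ∩ W := by
      rw [Set.image_inter h.injective, hh, hWinv h]
    rw [Set.inter_eq_right.2 hWD] at this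
    rw [this]
    ext x
    simp only [Set.mem_inter_iff, Set.mem_diff, Set.mem_singleton_iff]
    exact ⟨fun ⟨⟨_, hxp⟩, hxW⟩ => ⟨hxW, hxp⟩, fun ⟨hxW, hxp⟩ => ⟨⟨hWD hxW, hxp⟩, hxW⟩⟩
  rw [hWinv h] at h1
  exact (h1 ▸ hpW : p ∈ W \ {p}).2 rfl
end

section
/- Let P be a Polish space and let X ⊆ P be an analytic set such that the subspace X has no isolated points and is countable dense homogeneous. Then the subspace X is a Baire space. -/
open Set Filter Topology TopologicalSpace MeasureTheory

section LargestOpenMeagre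

variable {X Y : Type*} [TopologicalSpace X] [TopologicalSpace Y]

def largestOpenMeagre (X : Type*) [TopologicalSpace X] : Set X :=
  ⋃₀ {U | IsOpen U ∧ IsMeagre U}

lemma isOpen_largestOpenMeagre : IsOpen (largestOpenMeagre X) :=
  isOpen_sUnion fun _ hU => hU.1

lemma isMeagre_largestOpenMeagre [SecondCountableTopology X] :
    IsMeagre (largestOpenMeagre X) := by
  obtain ⟨T, hTc, hTS, hT⟩ :=
    isOpen_sUnion_countable {U : Set X | IsOpen U ∧ IsMeagre U} fun _ hU => hU.1
  rw [largestOpenMeagre, ← hT, sUnion_eq_biUnion]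
  exact isMeagre_biUnion hTc fun U hU => (hTS hU).2

lemma Homeomorph.image_largestOpenMeagre_subset (e : X ≃ₜ Y) :
    e '' largestOpenMeagre X ⊆ largestOpenMeagre Y := by
  rintro _ ⟨x, ⟨U, ⟨hUo, hUm⟩, hxU⟩, rfl⟩
  exact ⟨e '' U, ⟨e.isOpen_image.2 hUo, e.isInducing.isMeagre_image hUm⟩, mem_image_of_mem e hxU⟩

lemma Homeomorph.image_largestOpenMeagre (e : X ≃ₜ Y) :
    e '' largestOpenMeagre X = largestOpenMeagre Y := by
  refine e.image_largestOpenMeagre_subset.antisymm fun y hy => ?_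
  exact ⟨e.symm y, e.symm.image_largestOpenMeagre_subset (mem_image_of_mem _ hy),
    e.apply_symm_apply y⟩

lemma BaireSpace.of_largestOpenMeagre_eq_empty (h : largestOpenMeagre X = ∅) :
    BaireSpace X := by
  refine ⟨fun f hfo hfd => dense_iff_closure_eq.2 ?_⟩
  have hres : (⋂ n, f n) ∈ residual X :=
    countable_iInter_mem.2 fun n => residual_of_dense_open (hfo n) (hfd n)
  have hsub : (closure (⋂ n, f n))ᶜ ⊆ largestOpenMeagre X :=
    subset_sUnion_of_mem ⟨isClosed_closure.isOpen_compl,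
      IsMeagre.mono (compl_subset_compl.2 subset_closure) (by rwa [IsMeagre, compl_compl])⟩
  rwa [h, subset_empty_iff, compl_empty_iff] at hsub

end LargestOpenMeagre

section MeagreOpen

variable {X : Type*} [TopologicalSpace X]

lemma exists_seq_isOpen_dense_of_mem_residual {s : Set X} (hs : s ∈ residual X) :
    ∃ u : ℕ → Set X, (∀ n, IsOpen (u n)) ∧ (∀ n, Dense (u n)) ∧ ⋂ n, u n ⊆ s := by
  obtain ⟨S, hSo, hSd, hSc, hSs⟩ := mem_residual_iff.1 hs
  obtain ⟨u, hu⟩ := (hSc.insert univ).exists_eq_range (insert_nonempty _ _)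
  have hS : ∀ t ∈ insert univ S, IsOpen t ∧ Dense t := by
    rintro t (rfl | ht)
    exacts [⟨isOpen_univ, dense_univ⟩, ⟨hSo t ht, hSd t ht⟩]
  rw [hu, forall_mem_range] at hS
  refine ⟨u, fun n => (hS n).1, fun n => (hS n).2, ?_⟩
  rwa [← sInter_range, ← hu, sInter_insert, univ_inter]

lemma IsMeagre.exists_countable_dense_subset_eq_inter_isGδ [SecondCountableTopology X]
    [T1Space X] {W : Set X} (hWm : IsMeagre W) (hWo : IsOpen W) :
    ∃ Q ⊆ W, Q.Countable ∧ W ⊆ closure Q ∧ ∃ G, IsGδ G ∧ G ∩ W = Q := by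
  rcases W.eq_empty_or_nonempty with rfl | ⟨w, hw⟩
  · exact ⟨∅, subset_rfl, countable_empty, empty_subset _, ∅, isOpen_empty.isGδ, inter_self _⟩
  obtain ⟨u, huo, hud, hu⟩ := exists_seq_isOpen_dense_of_mem_residual hWm
  have hV : ∀ k, IsOpen (⋂₀ (u '' Iic k)) ∧ Dense (⋂₀ (u '' Iic k)) := fun k =>
    have hfin := (finite_Iic k).image u
    ⟨hfin.isOpen_sInter (forall_mem_image.2 fun n _ => huo n),
      hfin.dense_sInter (forall_mem_image.2 fun n _ => huo n) (forall_mem_image.2 fun n _ => hud n)⟩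
  obtain ⟨b, hbc, -, hb⟩ := exists_countable_basis X
  obtain ⟨B, hB⟩ : ∃ B : ℕ → Set X, {U ∈ b | (U ∩ W).Nonempty} = range B := by
    refine (hbc.mono (sep_subset _ _)).exists_eq_range ?_
    obtain ⟨U, hUb, hwU, -⟩ := hb.exists_subset_of_mem_open (mem_univ w) isOpen_univ
    exact ⟨U, hUb, w, hwU, hw⟩
  have hBk : ∀ k, B k ∈ b ∧ (B k ∩ W).Nonempty := fun k => hB.symm.subset (mem_range_self k)
  -- `q k ∈ u 0 ∩ ⋯ ∩ u k`, so each `(u n)ᶜ` contains only finitely many `q k`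
  choose q hq using fun k =>
    (hV k).2.inter_open_nonempty _ ((hb.isOpen (hBk k).1).inter hWo) (hBk k).2
  refine ⟨range q, range_subset_iff.2 fun k => (hq k).1.2, countable_range q, fun x hx => ?_,
    ⋂ n, (u n ∪ q '' Iio n), .iInter fun n => (huo n).isGδ.union ((finite_Iio n).image q).isGδ,
    subset_antisymm ?_ ?_⟩
  · refine mem_closure_iff.2 fun O hO hxO => ?_
    obtain ⟨U, hUb, hxU, hUO⟩ := hb.exists_subset_of_mem_open hxO hO
    obtain ⟨k, rfl⟩ : U ∈ range B := hB ▸ ⟨hUb, x, hxU, hx⟩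
    exact ⟨q k, hUO (hq k).1.1, mem_range_self k⟩
  · rintro x ⟨hxG, hxW⟩
    obtain ⟨n, hn⟩ : ∃ n, x ∉ u n := by simpa using fun h => hu h hxW
    obtain hxu | ⟨k, -, rfl⟩ := mem_iInter.1 hxG n
    exacts [absurd hxu hn, mem_range_self k]
  · rintro _ ⟨k, rfl⟩
    refine ⟨mem_iInter.2 fun n => ?_, (hq k).1.2⟩
    rcases lt_or_ge k n with hkn | hnk
    exacts [Or.inr (mem_image_of_mem q hkn), Or.inl ((hq k).2 _ (mem_image_of_mem u hnk))]

end MeagreOpen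

section Condensation

variable {Y Z : Type*} [TopologicalSpace Y]

/-- The points of `Y` all of whose neighbourhoods have an uncountable image under `f`. -/
def condensationSet (f : Y → Z) : Set Y :=
  (⋃₀ {U | IsOpen U ∧ (f '' U).Countable})ᶜ

variable {f : Y → Z}

lemma isClosed_condensationSet : IsClosed (condensationSet f) :=
  (isOpen_sUnion fun _ hU => hU.1).isClosed_compl

lemma countable_image_compl_condensationSet [SecondCountableTopology Y] :
    (f '' (condensationSet f)ᶜ).Countable := by
  obtain ⟨T, hTc, hTS, hT⟩ :=
    isOpen_sUnion_countable {U : Set Y | IsOpen U ∧ (f '' U).Countable} fun _ hU => hU.1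
  rw [condensationSet, compl_compl, ← hT, sUnion_eq_biUnion, image_iUnion₂]
  exact hTc.biUnion fun U hU => (hTS hU).2

lemma condensationSet_nonempty [SecondCountableTopology Y] (hf : ¬(range f).Countable) :
    (condensationSet f).Nonempty := by
  refine nonempty_iff_ne_empty.2 fun h => hf ?_
  simpa [h] using countable_image_compl_condensationSet (f := f)

lemma inter_condensationSet_eq_empty [SecondCountableTopology Y] {U : Set Y} (hU : IsOpen U)
    (hc : (f '' (condensationSet f ∩ U)).Countable) : condensationSet f ∩ U = ∅ := by
  have hUc : (f '' U).Countable := by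
    refine (hc.union (countable_image_compl_condensationSet (f := f))).mono ?_
    rintro _ ⟨y, hyU, rfl⟩
    by_cases hy : y ∈ condensationSet f
    exacts [Or.inl ⟨y, ⟨hy, hyU⟩, rfl⟩, Or.inr ⟨y, hy, rfl⟩]
  have hU' : U ⊆ (condensationSet f)ᶜ := by
    rw [condensationSet, compl_compl]
    exact subset_sUnion_of_mem ⟨hU, hUc⟩
  exact eq_empty_of_forall_notMem fun y hy => hU' hy.2 hy.1

end Condensation

/-- The preimage is a dense `Gδ` which is also meagre, being a countable union of closed fibres
with empty interior. -/
lemma not_isGδ_preimage_of_countable {K Z : Type*} [TopologicalSpace K] [BaireSpace K]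
    [Nonempty K] [TopologicalSpace Z] [T1Space Z] {g : K → Z} (hg : Continuous g)
    (hopen : ∀ V : Set K, IsOpen V → (g '' V).Countable → V = ∅) {D : Set Z}
    (hDc : D.Countable) (hDd : Dense (g ⁻¹' D)) : ¬IsGδ (g ⁻¹' D) := by
  intro hG
  have hfib : ∀ z, IsNowhereDense (g ⁻¹' {z}) := fun z => by
    rw [(isClosed_singleton.preimage hg).isNowhereDense_iff]
    exact hopen _ isOpen_interior ((countable_singleton z).mono
      ((image_mono interior_subset).trans (image_preimage_subset g {z})))
  have hmeagre : IsMeagre (g ⁻¹' D) := by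
    rw [← biUnion_preimage_singleton]
    exact isMeagre_biUnion hDc fun z _ => (hfib z).isMeagre
  have hcomeagre : IsMeagre (g ⁻¹' D)ᶜ := by
    rw [IsMeagre, compl_compl]
    exact residual_of_dense_Gδ hG hDd
  exact not_isMeagre_of_isOpen isOpen_univ univ_nonempty (by simpa using hmeagre.union hcomeagre)

lemma exists_countable_forall_not_isGδ_preimage {Y Z : Type*} [TopologicalSpace Y]
    [PolishSpace Y] [TopologicalSpace Z] [T1Space Z] {f : Y → Z} (hf : Continuous f)
    (hunc : ¬(range f).Countable) :
    ∃ E ⊆ range f, E.Countable ∧ ∀ D, E ⊆ D → D.Countable → ¬IsGδ (f ⁻¹' D) := by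
  let C := condensationSet f
  have : PolishSpace C := isClosed_condensationSet.polishSpace
  have : Nonempty C := (condensationSet_nonempty hunc).to_subtype
  obtain ⟨E₀, hE₀c, hE₀d⟩ := exists_countable_dense C
  refine ⟨(f ∘ (↑)) '' E₀, range_comp_subset_range _ f |>.trans' (image_subset_range _ _),
    hE₀c.image _, fun D hED hDc hG => ?_⟩
  have hGC : IsGδ ((↑) ⁻¹' (f ⁻¹' D) : Set C) := hG.preimage continuous_subtype_val
  refine not_isGδ_preimage_of_countable (hf.comp continuous_subtype_val) (fun V hV hVc => ?_)
    hDc (hE₀d.mono fun x hx => hED (mem_image_of_mem _ hx)) hGC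
  obtain ⟨U, hU, rfl⟩ := isOpen_induced_iff.1 hV
  rw [image_comp, Subtype.image_preimage_coe] at hVc
  exact Subtype.preimage_coe_eq_empty.2 (inter_condensationSet_eq_empty hU hVc)

section CDH

variable {X : Type*} [TopologicalSpace X]

lemma Dense.union_diff_closure {S E W : Set X} (hS : Dense S) (hWE : W ⊆ closure E) :
    Dense (E ∪ (S \ closure W)) := by
  intro z
  by_cases hz : z ∈ closure W
  · exact closure_mono subset_union_left (closure_minimal hWE isClosed_closure hz)
  · refine closure_mono ?_ (hS.open_subset_closure_inter isClosed_closure.isOpen_compl hz)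
    rintro w ⟨hwW, hwS⟩
    exact Or.inr ⟨hwS, hwW⟩

lemma IsCDH.exists_homeomorph_image_inter_eq [SeparableSpace X] (hX : IsCDH X) {W D E : Set X}
    (hW : ∀ e : X ≃ₜ X, e '' W = W) (hDc : D.Countable) (hDd : Dense D) (hEc : E.Countable)
    (hEW : E ⊆ W) (hWE : W ⊆ closure E) : ∃ e : X ≃ₜ X, e '' (D ∩ W) = E := by
  obtain ⟨S, hSc, hSd⟩ := exists_countable_dense X
  obtain ⟨e, he⟩ := hX D (E ∪ (S \ closure W)) hDc hDd (hEc.union (hSc.mono sdiff_subset))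
    (hSd.union_diff_closure hWE)
  refine ⟨e, ?_⟩
  rw [image_inter e.injective, he, hW e, union_inter_distrib_right, inter_eq_left.2 hEW,
    (disjoint_sdiff_left.mono_right subset_closure).inter_eq, union_empty]

lemma IsCDH.eq_empty_of_countable [SeparableSpace X] (hX : IsCDH X)
    (hiso : ∀ x : X, ¬IsOpen {x}) {W : Set X} (hWo : IsOpen W) (hW : ∀ e : X ≃ₜ X, e '' W = W)
    (hWc : W.Countable) : W = ∅ := by
  refine eq_empty_of_forall_notMem fun w hw => ?_
  obtain ⟨S, hSc, hSd⟩ := exists_countable_dense X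
  obtain ⟨e, he⟩ := hX.exists_homeomorph_image_inter_eq hW (hSc.union hWc)
    (hSd.mono subset_union_left) (hWc.mono sdiff_subset) sdiff_subset
    ((dense_compl_singleton_iff_not_open.2 (hiso w)).open_subset_closure_inter hWo)
  rw [union_inter_cancel_right, hW e] at he
  exact (he ▸ hw : w ∈ W \ {w}).2 rfl

lemma IsCDH.countable_range_of_subset_isMeagre [SecondCountableTopology X] [T1Space X]
    (hX : IsCDH X) {W : Set X} (hWo : IsOpen W) (hWm : IsMeagre W)
    (hW : ∀ e : X ≃ₜ X, e '' W = W) {Y : Type*} [TopologicalSpace Y] [PolishSpace Y]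
    {f : Y → X} (hf : Continuous f) (hfW : range f ⊆ W) : (range f).Countable := by
  by_contra hunc
  obtain ⟨E, -, hEc, hE⟩ := exists_countable_forall_not_isGδ_preimage hf hunc
  obtain ⟨Q, hQW, hQc, hWQ, G, hG, hGW⟩ := hWm.exists_countable_dense_subset_eq_inter_isGδ hWo
  obtain ⟨S, hSc, hSd⟩ := exists_countable_dense X
  obtain ⟨e, he⟩ := hX.exists_homeomorph_image_inter_eq hW (hSc.union hEc)
    (hSd.mono subset_union_left) hQc hQW hWQ
  refine hE _ subset_union_right (hSc.union hEc) ?_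
  convert (hG.preimage e.continuous).preimage hf using 1
  ext y
  have hy : f y ∈ W := hfW (mem_range_self y)
  have hey : e (f y) ∈ W := hW e ▸ mem_image_of_mem e hy
  calc f y ∈ S ∪ E ↔ e (f y) ∈ e '' ((S ∪ E) ∩ W) := by
        rw [e.injective.mem_set_image, mem_inter_iff, and_iff_left hy]
    _ ↔ e (f y) ∈ G := by rw [he, ← hGW, mem_inter_iff, and_iff_left hey]

end CDH

lemma MeasureTheory.AnalyticSet.exists_polishSpace_range_eq_of_isOpen {P : Type*}
    [TopologicalSpace P] {X : Set P} (hA : AnalyticSet X) {W : Set X} (hW : IsOpen W) :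
    ∃ (Y : Type) (_ : TopologicalSpace Y) (_ : PolishSpace Y) (f : Y → X),
      Continuous f ∧ range f = W := by
  obtain ⟨β, _, _, g, hg, hgX⟩ := analyticSet_iff_exists_polishSpace_range.1 hA
  let g' : β → X := fun b => ⟨g b, hgX ▸ mem_range_self b⟩
  have hg' : Continuous g' := hg.subtype_mk _
  have hsurj : Function.Surjective g' := by
    rintro ⟨x, hx⟩
    obtain ⟨b, rfl⟩ := hgX ▸ hx
    exact ⟨b, rfl⟩
  exact ⟨g' ⁻¹' W, _, (hW.preimage hg').polishSpace, g' ∘ (↑), hg'.comp continuous_subtype_val,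
    by rw [range_comp, Subtype.range_coe, image_preimage_eq W hsurj]⟩

/-- An analytic CDH subspace of a Polish space without isolated points is a Baire space. -/
theorem baire_of_analytic_CDH
    (P : Type*) [TopologicalSpace P] [PolishSpace P] (X : Set P)
    (hA : MeasureTheory.AnalyticSet X)
    (hiso : ∀ x : ↥X, ¬ IsOpen ({x} : Set ↥X))
    (hCDH : IsCDH ↥X) :
    BaireSpace ↥X := by
  have hW : ∀ e : X ≃ₜ X, e '' largestOpenMeagre X = largestOpenMeagre X :=
    fun e => e.image_largestOpenMeagre
  refine .of_largestOpenMeagre_eq_empty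
    (hCDH.eq_empty_of_countable hiso isOpen_largestOpenMeagre hW ?_)
  obtain ⟨Y, _, _, f, hf, hfW⟩ := hA.exists_polishSpace_range_eq_of_isOpen isOpen_largestOpenMeagre
  exact hfW ▸ hCDH.countable_range_of_subset_isMeagre isOpen_largestOpenMeagre
    isMeagre_largestOpenMeagre hW hf hfW.subset
end

section
/- Let P be a Polish space and let X ⊆ P be an analytic set such that the subspace X is a Baire space. Then there exists a set G ⊆ X that is dense in the subspace X and is a Gδ subset of P (hence G is completely metrizable in the subspace topology). -/
/-!
Analytic sets have the Baire property (Lusin–Sierpiński). In a second-countable space every set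
`s` has a Baire-measurable hull `baireHull s ⊇ s` such that every Baire-measurable subset of
`baireHull s \ s` is meagre. Let `A_s` be the images of the cylinders under a continuous
surjection `f : ℕ^ℕ → A`, so that `A_s = ⋃ n, A_(n :: s)`. A point of `baireHull A_[]` avoiding
the meagre sets `baireHull A_s \ ⋃ n, baireHull A_(n :: s)` lies in `baireHull A_s` along a whole
branch `x`, hence in the closure of every `f '' cylinder x n`, which forces it to be `f x`.

So inside `closure X` the analytic set `X` agrees with an open set `u` up to a meagre set. The
part of `X` outside `closure u` is open in `X` and meagre, hence empty since `X` is Baire; thus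
`u` is dense in `closure X`, and `u` intersected with a dense Gδ on which `X` and `u` agree is the
required set.
-/

open Set Filter Topology TopologicalSpace MeasureTheory PiNat

section BaireHull

variable {α : Type*} [TopologicalSpace α]

theorem isMeagre_diff_of_residualEq {s t : Set α} (h : s =ᵇ t) : IsMeagre (s \ t) := by
  rw [IsMeagre]
  filter_upwards [eventuallyEq_set.1 h] with x hx
  exact fun hxs => hxs.2 (hx.1 hxs.1)

def meagreLocus (s : Set α) : Set α := ⋃₀ {u | IsOpen u ∧ IsMeagre (s ∩ u)}

theorem isOpen_meagreLocus (s : Set α) : IsOpen (meagreLocus s) :=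
  isOpen_sUnion fun _ hu => hu.1

theorem subset_meagreLocus {s u : Set α} (hu : IsOpen u) (h : IsMeagre (s ∩ u)) :
    u ⊆ meagreLocus s :=
  subset_sUnion_of_mem ⟨hu, h⟩

theorem isMeagre_inter_meagreLocus [SecondCountableTopology α] (s : Set α) :
    IsMeagre (s ∩ meagreLocus s) := by
  obtain ⟨T, hT, hTc, hTU⟩ := isOpen_sUnion_countable {u | IsOpen u ∧ IsMeagre (s ∩ u)}
    fun _ hu => hu.1
  rw [meagreLocus, ← hTU, sUnion_eq_biUnion, inter_iUnion₂]
  exact isMeagre_biUnion hT fun u hu => (hTc hu).2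

def baireHull (s : Set α) : Set α := s ∪ (meagreLocus s)ᶜ

theorem subset_baireHull (s : Set α) : s ⊆ baireHull s := subset_union_left

theorem baireHull_subset_closure (s : Set α) : baireHull s ⊆ closure s := by
  refine union_subset subset_closure (compl_subset_comm.1 ?_)
  refine subset_meagreLocus isClosed_closure.isOpen_compl ?_
  rw [← sdiff_eq, sdiff_eq_empty.2 subset_closure]
  exact IsMeagre.empty

theorem baireMeasurableSet_baireHull [SecondCountableTopology α] (s : Set α) :
    BaireMeasurableSet (baireHull s) := by
  have : baireHull s = s ∩ meagreLocus s ∪ (meagreLocus s)ᶜ := by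
    ext x
    simp only [baireHull, mem_union, mem_inter_iff, mem_compl_iff]
    tauto
  rw [this]
  exact (isMeagre_inter_meagreLocus s).baireMeasurableSet.union
    (isOpen_meagreLocus s).baireMeasurableSet.compl

theorem isMeagre_of_subset_baireHull_diff {s z : Set α} (hz : BaireMeasurableSet z)
    (hsub : z ⊆ baireHull s \ s) : IsMeagre z := by
  obtain ⟨u, hu, hzu⟩ := hz.residualEq_isOpen
  -- `s` misses `z`, which is almost all of `u`, so `u` lies in `meagreLocus s`, which `z` misses.
  have hsu : s ∩ u ⊆ u \ z := fun x hx => ⟨hx.2, fun hxz => (hsub hxz).2 hx.1⟩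
  have hu_sub : u ⊆ meagreLocus s :=
    subset_meagreLocus hu ((isMeagre_diff_of_residualEq hzu.symm).mono hsu)
  have hzu_sub : z ⊆ z \ u := by
    intro x hxz
    obtain ⟨hxs | hxL, hxs'⟩ := hsub hxz
    · exact absurd hxs hxs'
    · exact ⟨hxz, fun hxu => hxL (hu_sub hxu)⟩
  exact (isMeagre_diff_of_residualEq hzu).mono hzu_sub

end BaireHull

theorem exists_forall_res_of_exists_cons {β : Type*} {p : List β → Prop} (h0 : p [])
    (hstep : ∀ s, p s → ∃ b, p (b :: s)) : ∃ x : ℕ → β, ∀ n, p (res x n) := by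
  choose next hnext using hstep
  let branch : ℕ → {s // p s} := fun n =>
    Nat.rec ⟨[], h0⟩ (fun _ s => ⟨next s.1 s.2 :: s.1, hnext s.1 s.2⟩) n
  let x : ℕ → β := fun n => next (branch n).1 (branch n).2
  have hres (n : ℕ) : res x n = (branch n).1 := by
    induction n with
    | zero => rfl
    | succ n ih => rw [res_succ, ih]
  exact ⟨x, fun n => hres n ▸ (branch n).2⟩

section Suslin

variable {α : Type*}

def cylinderImage (f : (ℕ → ℕ) → α) (s : List ℕ) : Set α := f '' {x | res x s.length = s}

theorem cylinderImage_nil (f : (ℕ → ℕ) → α) : cylinderImage f [] = range f := by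
  simp [cylinderImage]

theorem cylinderImage_eq_iUnion_cons (f : (ℕ → ℕ) → α) (s : List ℕ) :
    cylinderImage f s = ⋃ n, cylinderImage f (n :: s) := by
  simp only [cylinderImage, ← image_iUnion, List.length_cons, res_succ, List.cons.injEq]
  congr 1
  ext x
  simp

theorem cylinderImage_res (f : (ℕ → ℕ) → α) (x : ℕ → ℕ) (n : ℕ) :
    cylinderImage f (res x n) = f '' cylinder x n := by
  simp [cylinderImage, cylinder_eq_res, res_length]

theorem eq_of_forall_mem_closure_image_cylinder [TopologicalSpace α] [T2Space α] {f : (ℕ → ℕ) → α}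
    (hf : Continuous f) {x : ℕ → ℕ} {y : α} (hy : ∀ n, y ∈ closure (f '' cylinder x n)) :
    y = f x := by
  refine eq_of_nhds_neBot (clusterPt_iff_forall_mem_closure.2 fun w hw => ?_)
  obtain ⟨_, ⟨z, n, rfl⟩, hxz, hzw⟩ :=
    (isTopologicalBasis_cylinders _).mem_nhds_iff.1 (hf.continuousAt hw)
  rw [← mem_cylinder_iff_eq.1 hxz] at hzw
  exact closure_mono (image_subset_iff.2 hzw) (hy n)

theorem MeasureTheory.AnalyticSet.baireMeasurableSet [TopologicalSpace α]
    [SecondCountableTopology α] [T2Space α] {A : Set α} (hA : AnalyticSet A) :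
    BaireMeasurableSet A := by
  rw [AnalyticSet] at hA
  rcases hA with rfl | ⟨f, hf, rfl⟩
  · exact isOpen_empty.baireMeasurableSet
  let hull : List ℕ → Set α := fun s => baireHull (cylinderImage f s)
  have hstep_meagre (s : List ℕ) : IsMeagre (hull s \ ⋃ n, hull (n :: s)) := by
    refine isMeagre_of_subset_baireHull_diff (s := cylinderImage f s)
      ((baireMeasurableSet_baireHull _).diff (.iUnion fun n => baireMeasurableSet_baireHull _)) ?_
    calc hull s \ ⋃ n, hull (n :: s) ⊆ hull s \ ⋃ n, cylinderImage f (n :: s) :=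
          sdiff_subset_sdiff_right (iUnion_mono fun n => subset_baireHull _)
      _ = hull s \ cylinderImage f s := by rw [← cylinderImage_eq_iUnion_cons]
  have hcover : hull [] \ range f ⊆ ⋃ s, hull s \ ⋃ n, hull (n :: s) := by
    intro y ⟨hy, hyf⟩
    by_contra hbad
    have hextend (s : List ℕ) (hs : y ∈ hull s) : ∃ n, y ∈ hull (n :: s) := by
      by_contra h
      exact hbad (mem_iUnion.2 ⟨s, hs, by simpa using h⟩)
    obtain ⟨x, hx⟩ := exists_forall_res_of_exists_cons hy hextend
    refine hyf ⟨x, (eq_of_forall_mem_closure_image_cylinder hf fun n => ?_).symm⟩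
    rw [← cylinderImage_res]
    exact baireHull_subset_closure _ (hx n)
  have hrange : range f = hull [] \ (hull [] \ range f) := by
    rw [sdiff_sdiff_cancel_left]
    exact cylinderImage_nil f ▸ subset_baireHull _
  rw [hrange]
  exact (baireMeasurableSet_baireHull _).diff
    ((isMeagre_iUnion hstep_meagre).mono hcover).baireMeasurableSet

end Suslin

section DenseInducing

variable {Z Y : Type*} [TopologicalSpace Z] [TopologicalSpace Y] {ι : Z → Y}

theorem Topology.IsDenseInducing.isNowhereDense_preimage (hι : IsDenseInducing ι) {s : Set Y}
    (hs : IsNowhereDense s) : IsNowhereDense (ι ⁻¹' s) := by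
  rw [IsNowhereDense, eq_empty_iff_forall_notMem]
  intro a ha
  have hnhds : closure s ∈ 𝓝 (ι a) := by
    refine mem_of_superset (hι.closure_image_mem_nhds (mem_interior_iff_mem_nhds.1 ha)) ?_
    calc closure (ι '' closure (ι ⁻¹' s)) ⊆ closure (closure (ι '' (ι ⁻¹' s))) :=
          closure_mono (image_closure_subset_closure_image hι.continuous)
      _ ⊆ closure s := by
          rw [closure_closure]
          exact closure_mono (image_preimage_subset _ _)
  have := mem_interior_iff_mem_nhds.2 hnhds
  rw [hs] at this
  exact this

theorem Topology.IsDenseInducing.isMeagre_preimage (hι : IsDenseInducing ι) {s : Set Y}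
    (hs : IsMeagre s) : IsMeagre (ι ⁻¹' s) := by
  obtain ⟨S, hS, hSc, hsS⟩ := isMeagre_iff_countable_union_isNowhereDense.1 hs
  refine (isMeagre_biUnion hSc fun t ht => (hι.isNowhereDense_preimage (hS t ht)).isMeagre).mono ?_
  rw [← preimage_iUnion₂, ← sUnion_eq_biUnion]
  exact preimage_mono hsS

theorem Topology.IsDenseInducing.exists_isGδ_dense_subset_range [BaireSpace Z] [BaireSpace Y]
    (hι : IsDenseInducing ι) (hbm : BaireMeasurableSet (range ι)) :
    ∃ G ⊆ range ι, IsGδ G ∧ Dense G := by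
  obtain ⟨u, hu, hιu⟩ := hbm.residualEq_isOpen
  have hrange : range ι ⊆ closure u := by
    have hsub : ι ⁻¹' (closure u)ᶜ ⊆ ι ⁻¹' (range ι \ u) :=
      fun z hz => ⟨mem_range_self z, fun hzu => hz (subset_closure hzu)⟩
    have hmeagre : IsMeagre (ι ⁻¹' (closure u)ᶜ) :=
      (hι.isMeagre_preimage (isMeagre_diff_of_residualEq hιu)).mono hsub
    have hempty : ι ⁻¹' (closure u)ᶜ = ∅ := by
      by_contra h
      exact not_isMeagre_of_isOpen (isClosed_closure.isOpen_compl.preimage hι.continuous)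
        (nonempty_iff_ne_empty.2 h) hmeagre
    rintro _ ⟨z, rfl⟩
    by_contra h
    exact eq_empty_iff_forall_notMem.1 hempty z h
  obtain ⟨t, ht, htGδ, htd⟩ := mem_residual.1 (eventuallyEq_set.1 hιu)
  refine ⟨u ∩ t, fun y hy => (ht hy.2).2 hy.1, hu.isGδ.inter htGδ, ?_⟩
  refine dense_closure.1 (hι.dense.mono ?_)
  exact hrange.trans (closure_minimal (htd.open_subset_closure_inter hu) isClosed_closure)

end DenseInducing

theorem IsGδ.image_val {α : Type*} [TopologicalSpace α] {s : Set α} (hs : IsGδ s) {t : Set s}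
    (ht : IsGδ t) : IsGδ (Subtype.val '' t) := by
  obtain ⟨U, hU, rfl⟩ := isGδ_iff_eq_iInter_nat.1 ht
  choose V hV hVU using fun n => isOpen_induced_iff.1 (hU n)
  have : Subtype.val '' ⋂ n, U n = s ∩ ⋂ n, V n := by
    simp_rw [← hVU, ← preimage_iInter, Subtype.image_preimage_coe]
  rw [this]
  exact hs.inter (.iInter fun n => (hV n).isGδ)

theorem IsGδ.polishSpace {α : Type*} [TopologicalSpace α] [PolishSpace α] {s : Set α}
    (hs : IsGδ s) : PolishSpace s := by
  obtain ⟨U, hU, rfl⟩ := isGδ_iff_eq_iInter_nat.1 hs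
  have (n : ℕ) : PolishSpace (U n) := (hU n).polishSpace
  let diag : ↥(⋂ n, U n) → ∀ n, U n := fun x n => ⟨x, mem_iInter.1 x.2 n⟩
  have hdiag : IsEmbedding diag :=
    .of_comp (by fun_prop) (by fun_prop : Continuous fun y : ∀ n, U n => (y 0 : α))
      IsEmbedding.subtypeVal
  have hrange : range diag = {y | ∀ n, (y n : α) = y 0} := by
    ext y
    refine ⟨?_, fun hy => ⟨⟨y 0, mem_iInter.2 fun n => hy n ▸ (y n).2⟩, ?_⟩⟩
    · rintro ⟨x, rfl⟩ n
      rfl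
    · funext n
      exact Subtype.ext (hy n).symm
  have hclosed : IsClosed (range diag) := by
    rw [hrange, ofPred_forall]
    exact isClosed_iInter fun n => isClosed_eq (by fun_prop) (by fun_prop)
  exact IsClosedEmbedding.polishSpace ⟨hdiag, hclosed⟩

/-- An analytic Baire subspace of a Polish space has a dense subset which is `Gδ` in the
ambient Polish space (and hence is completely metrizable, i.e. Polish). -/
theorem analytic_baire_has_dense_Gdelta
    (P : Type*) [TopologicalSpace P] [PolishSpace P] (X : Set P)
    (hA : MeasureTheory.AnalyticSet X)
    (hBaire : BaireSpace ↥X) :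
    ∃ G : Set P, G ⊆ X ∧ Dense {x : ↥X | ↑x ∈ G} ∧ IsGδ G ∧ PolishSpace ↥G := by
  have : PolishSpace (closure X) := isClosed_closure.polishSpace
  let ι : X → closure X := inclusion subset_closure
  have hι : IsDenseInducing ι :=
    ⟨(IsEmbedding.inclusion _).isInducing, (denseRange_inclusion_iff _).2 subset_rfl⟩
  have hbm : BaireMeasurableSet (range ι) := by
    rw [range_inclusion]
    exact (hA.preimage continuous_subtype_val).baireMeasurableSet
  obtain ⟨G, hGι, hGδ, hGd⟩ := hι.exists_isGδ_dense_subset_range hbm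
  have hGδ' : IsGδ (Subtype.val '' G) := isClosed_closure.isGδ.image_val hGδ
  refine ⟨Subtype.val '' G, ?_, ?_, hGδ', hGδ'.polishSpace⟩
  · rintro _ ⟨y, hy, rfl⟩
    obtain ⟨x, rfl⟩ := hGι hy
    exact x.2
  · have hpre : {x : X | ↑x ∈ Subtype.val '' G} = ι ⁻¹' G := by
      ext x
      exact Subtype.val_injective.mem_set_image (a := ι x)
    rw [hpre, hι.isInducing.dense_iff, image_preimage_eq_of_subset hGι]
    exact fun x => hGd _
end

section
/- Let X be a separable metrizable topological space such that the countable power X^ℕ, with the product topology, is countable dense homogeneous. Then X is a Baire space. -/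
open Set TopologicalSpace

section Aux

variable {X : Type*} [TopologicalSpace X]

/-- Auxiliary: points of the "Cantor-like" set that are `a₀` except on a finite set `s`
(or forced values on `I`). -/
def cdhQ (I : Finset ℕ) (x : ℕ → X) (a₀ a₁ : X) (s : Finset ℕ) : ℕ → X :=
  fun i => if i ∈ I then x i else if i ∈ s then a₁ else a₀

/-- Auxiliary: compact "Cantor-like" subset of the product. -/
def cdhK (I : Finset ℕ) (x : ℕ → X) (a₀ a₁ : X) : Set (ℕ → X) :=
  Set.univ.pi fun i => if i ∈ I then {x i} else {a₀, a₁}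

lemma cdhQ_mem_K (I : Finset ℕ) (x : ℕ → X) (a₀ a₁ : X) (s : Finset ℕ) :
    cdhQ I x a₀ a₁ s ∈ cdhK I x a₀ a₁ := by
  intro i _
  by_cases hi : i ∈ I <;> simp only [cdhQ, cdhK, hi, if_pos, if_neg, if_true, if_false]
  · simp [hi]
  · by_cases hs : i ∈ s <;> simp [hi, hs]

lemma cdhK_compact (I : Finset ℕ) (x : ℕ → X) (a₀ a₁ : X) :
    IsCompact (cdhK I x a₀ a₁) := by
  apply isCompact_univ_pi
  intro i
  by_cases hi : i ∈ I <;> simp only [hi, if_pos, if_neg, if_true, if_false]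
  · exact (Set.finite_singleton _).isCompact
  · exact (Set.toFinite _).isCompact

lemma cdhK_mem_forced {I : Finset ℕ} {x : ℕ → X} {a₀ a₁ : X} {y : ℕ → X}
    (hy : y ∈ cdhK I x a₀ a₁) {i : ℕ} (hi : i ∈ I) : y i = x i := by
  have := hy i (Set.mem_univ i)
  simpa [cdhK, hi] using this

lemma cdhK_mem_free {I : Finset ℕ} {x : ℕ → X} {a₀ a₁ : X} {y : ℕ → X}
    (hy : y ∈ cdhK I x a₀ a₁) {i : ℕ} (hi : i ∉ I) : y i = a₀ ∨ y i = a₁ := by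
  have := hy i (Set.mem_univ i)
  simpa [cdhK, hi] using this

/-- Key lemma: any open set meeting the Cantor-like set contains infinitely many
points of the countable family `cdhQ`. -/
lemma cdhQ_infinite {a₀ a₁ : X} (hne : a₀ ≠ a₁) (I : Finset ℕ) (x : ℕ → X)
    {O : Set (ℕ → X)} (hO : IsOpen O) {z : ℕ → X} (hzO : z ∈ O)
    (hzK : z ∈ cdhK I x a₀ a₁) :
    (O ∩ Set.range (cdhQ I x a₀ a₁)).Infinite := by
  classical
  obtain ⟨J, V, hJV, hsub⟩ := isOpen_pi_iff.mp hO z hzO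
  set s₀ : Finset ℕ := (J \ I).filter (fun i => z i = a₁) with hs₀
  set f : ℕ → (ℕ → X) := fun j => cdhQ I x a₀ a₁ (insert j s₀) with hf
  have hmem : ∀ j ∉ (I ∪ J : Finset ℕ), f j ∈ O := by
    intro j hj
    apply hsub
    intro i hiJ
    have hiJ' : i ∈ J := hiJ
    have hz : z i ∈ V i := (hJV i hiJ').2
    by_cases hiI : i ∈ I
    · have : f j i = x i := by simp [hf, cdhQ, hiI]
      rw [this, ← cdhK_mem_forced hzK hiI]
      exact hz
    · have hij : i ≠ j := by
        rintro rfl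
        exact hj (Finset.mem_union.mpr (Or.inr hiJ'))
      have hmem_iff : i ∈ insert j s₀ ↔ z i = a₁ := by
        constructor
        · intro hi
          rcases Finset.mem_insert.mp hi with h | h
          · exact absurd h hij
          · exact (Finset.mem_filter.mp h).2
        · intro hzi
          exact Finset.mem_insert.mpr (Or.inr (Finset.mem_filter.mpr
            ⟨Finset.mem_sdiff.mpr ⟨hiJ', hiI⟩, hzi⟩))
      rcases cdhK_mem_free hzK hiI with h0 | h1
      · have : f j i = a₀ := by
          have : i ∉ insert j s₀ := fun hi => hne ((h0 ▸ (hmem_iff.mp hi) : a₀ = a₁))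
          simp [hf, cdhQ, hiI, this]
        rw [this, ← h0]; exact hz
      · have : f j i = a₁ := by
          have : i ∈ insert j s₀ := hmem_iff.mpr h1
          simp [hf, cdhQ, hiI, this]
        rw [this, ← h1]; exact hz
  have hinj : Set.InjOn f ((↑(I ∪ J) : Set ℕ))ᶜ := by
    intro j hj j' hj' hjj'
    by_contra hne'
    have hjI : j ∉ I := fun h => hj (by simp [h])
    have hj'I : j' ∉ I := fun h => hj' (by simp [h])
    have hjJ : j ∉ J := fun h => hj (by simp [h])
    have h1 : f j j = a₁ := by simp [hf, cdhQ, hjI]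
    have h2 : f j' j = a₀ := by
      have : j ∉ insert j' s₀ := by
        intro hmem'
        rcases Finset.mem_insert.mp hmem' with h | h
        · exact hne' (h ▸ rfl)
        · exact hjJ (Finset.mem_sdiff.mp (Finset.mem_filter.mp h).1).1
      simp [hf, cdhQ, hjI, this]
    rw [hjj'] at h1
    rw [h1] at h2
    exact hne h2.symm
  have hAinf : ((↑(I ∪ J) : Set ℕ))ᶜ.Infinite :=
    Set.Finite.infinite_compl (Finset.finite_toSet _)
  have himg : f '' ((↑(I ∪ J) : Set ℕ))ᶜ ⊆ O ∩ Set.range (cdhQ I x a₀ a₁) := by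
    rintro y ⟨j, hj, rfl⟩
    exact ⟨hmem j (by simpa using hj), ⟨insert j s₀, rfl⟩⟩
  exact ((hAinf.image hinj).mono himg)

end Aux

/-- If the countable power of a separable metrizable space `X` is CDH, then `X` is Baire. -/
theorem baire_of_CDH_pow
    (X : Type*) [TopologicalSpace X] [TopologicalSpace.MetrizableSpace X]
    [TopologicalSpace.SeparableSpace X]
    (hCDH : IsCDH (ℕ → X)) :
    BaireSpace X := by
  rcases subsingleton_or_nontrivial X with hX | hX
  · -- trivial case : at most one point
    constructor
    intro f _ hfd
    rcases isEmpty_or_nonempty X with hE | hNE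
    · intro x; exact isEmptyElim x
    · have hall : ∀ n, f n = Set.univ := by
        intro n
        obtain ⟨x, hx⟩ := (hfd n).nonempty
        apply Set.eq_univ_iff_forall.mpr
        intro y
        rwa [Subsingleton.elim y x]
      have : (⋂ n, f n) = Set.univ := by simp [hall]
      rw [this]; exact dense_univ
  · by_contra hB
    obtain ⟨f, hfo, hfd, hfnd⟩ : ∃ f : ℕ → Set X,
        (∀ n, IsOpen (f n)) ∧ (∀ n, Dense (f n)) ∧ ¬ Dense (⋂ n, f n) := by
      by_contra hcon
      push_neg at hcon
      exact hB ⟨fun f ho hd => hcon f ho hd⟩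
    obtain ⟨U, hUo, hUne, hUdisj⟩ : ∃ U, IsOpen U ∧ U.Nonempty ∧ U ∩ ⋂ n, f n = ∅ := by
      rw [dense_iff_inter_open] at hfnd
      push_neg at hfnd
      obtain ⟨U, hUo, hUne, hU⟩ := hfnd
      exact ⟨U, hUo, hUne, hU⟩
    obtain ⟨a₀, a₁, hne⟩ := exists_pair_ne X
    -- finite intersections of the dense open sets
    set g : ℕ → Set X := fun n => ⋂ k ∈ Finset.range (n + 1), f k with hgdef
    have hgo : ∀ n, IsOpen (g n) := fun n => isOpen_biInter_finset fun k _ => hfo k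
    have hgd : ∀ n, Dense (g n) := by
      intro n
      induction n with
      | zero => simpa [hgdef] using hfd 0
      | succ n ih =>
          have : g (n + 1) = f (n + 1) ∩ g n := by
            simp only [hgdef, Finset.range_add_one, Finset.set_biInter_insert]
          rw [this]
          exact (hfd (n + 1)).inter_of_isOpen_left ih (hfo (n + 1))
    have hganti : ∀ m n, m ≤ n → g n ⊆ g m := by
      intro m n hmn x hx
      simp only [hgdef, Set.mem_iInter] at hx ⊢
      intro k hk
      exact hx k (Finset.mem_range.mpr (lt_of_lt_of_le (Finset.mem_range.mp hk)
        (Nat.succ_le_succ hmn)))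
    have hgf : ∀ n, g n ⊆ f n := by
      intro n x hx
      simp only [hgdef, Set.mem_iInter] at hx
      exact hx n (Finset.mem_range.mpr (Nat.lt_succ_self n))
    -- instances
    letI : MetricSpace X := TopologicalSpace.metrizableSpaceMetric X
    haveI : SecondCountableTopology X := UniformSpace.secondCountable_of_separable X
    haveI : TopologicalSpace.MetrizableSpace (ℕ → X) := UniformSpace.metrizableSpace
    letI : MetricSpace (ℕ → X) := TopologicalSpace.metrizableSpaceMetric (ℕ → X)
    -- countable basis of the product
    obtain ⟨bb, hbc, hbne, hbb⟩ := TopologicalSpace.exists_countable_basis (ℕ → X)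
    have hbnonempty : bb.Nonempty := by
      obtain ⟨t, htb, -, -⟩ := hbb.exists_subset_of_mem_open
        (Set.mem_univ (fun _ => a₀)) isOpen_univ
      exact ⟨t, htb⟩
    obtain ⟨e, he⟩ := hbc.exists_eq_range hbnonempty
    have heo : ∀ m, IsOpen (e m) := fun m => hbb.isOpen (he ▸ Set.mem_range_self m)
    have hene : ∀ m, (e m).Nonempty := by
      intro m
      rw [Set.nonempty_iff_ne_empty]
      intro h
      exact hbne (h ▸ (he ▸ Set.mem_range_self m))
    -- the closed sets with empty interior
    set G : ℕ → Set (ℕ → X) := fun n => (fun y => y 0) ⁻¹' (g n)ᶜ with hGdef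
    have hGc : ∀ n, IsClosed (G n) :=
      fun n => ((hgo n).isClosed_compl).preimage (continuous_apply 0)
    have hGint : ∀ n, interior (G n) = ∅ := by
      intro n
      have : interior ((g n)ᶜ) = ∅ := by
        rw [interior_compl, (hgd n).closure_eq, Set.compl_univ]
      rw [hGdef]
      rw [← (isOpenMap_eval 0).preimage_interior_eq_interior_preimage (continuous_apply 0)]
      rw [this]
      rfl
    have hGmono : ∀ m n, m ≤ n → G m ⊆ G n := by
      intro m n hmn y hy
      exact fun h => hy (hganti m n hmn h)
    -- the set P
    have hPpick : ∀ m, (e m \ G m).Nonempty := by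
      intro m
      rw [Set.nonempty_iff_ne_empty]
      intro hemp
      have hsub : e m ⊆ G m := by
        intro y hy
        by_contra hyG
        exact (Set.eq_empty_iff_forall_notMem.mp hemp y) ⟨hy, hyG⟩
      have : e m ⊆ interior (G m) := (heo m).subset_interior_iff.mpr hsub
      rw [hGint m] at this
      exact (hene m).ne_empty (Set.subset_empty_iff.mp this)
    choose p hp using hPpick
    set P : Set (ℕ → X) := Set.range p with hPdef
    have hPd : Dense P := by
      rw [hbb.dense_iff]
      intro o hob _
      rw [he] at hob
      obtain ⟨m, rfl⟩ := hob
      exact ⟨p m, (hp m).1, Set.mem_range_self m⟩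
    have hPc : P.Countable := Set.countable_range p
    have hPG : ∀ n, (P ∩ G n).Finite := by
      intro n
      apply Set.Finite.subset ((Set.finite_Iic n).image p)
      rintro y ⟨⟨m, rfl⟩, hyG⟩
      refine ⟨m, ?_, rfl⟩
      by_contra hmn
      have hnm : n ≤ m := le_of_not_ge (fun h => hmn h)
      exact (hp m).2 (hGmono n m hnm hyG)
    -- the set Q
    have hbox : ∀ m, ∃ (x : ℕ → X) (I : Finset ℕ) (V : ℕ → Set X),
        (∀ i ∈ I, IsOpen (V i) ∧ x i ∈ V i) ∧ (I : Set ℕ).pi V ⊆ e m := by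
      intro m
      obtain ⟨x, hx⟩ := hene m
      obtain ⟨I, V, h1, h2⟩ := isOpen_pi_iff.mp (heo m) x hx
      exact ⟨x, I, V, h1, h2⟩
    choose xc Ic Vc hIV hIsub using hbox
    set Q : Set (ℕ → X) := ⋃ m, Set.range (cdhQ (Ic m) (xc m) a₀ a₁) with hQdef
    have hQc : Q.Countable := Set.countable_iUnion fun m => Set.countable_range _
    have hKsub : ∀ m, cdhK (Ic m) (xc m) a₀ a₁ ⊆ e m := by
      intro m y hy
      apply hIsub m
      intro i hi
      have hi' : i ∈ Ic m := hi
      rw [cdhK_mem_forced hy hi']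
      exact (hIV m i hi').2
    have hQem : ∀ m s, cdhQ (Ic m) (xc m) a₀ a₁ s ∈ e m :=
      fun m s => hKsub m (cdhQ_mem_K _ _ _ _ s)
    have hQd : Dense Q := by
      rw [hbb.dense_iff]
      intro o hob _
      rw [he] at hob
      obtain ⟨m, rfl⟩ := hob
      exact ⟨cdhQ (Ic m) (xc m) a₀ a₁ ∅, hQem m ∅,
        Set.mem_iUnion.mpr ⟨m, Set.mem_range_self _⟩⟩
    -- apply CDH
    obtain ⟨h, hh⟩ := hCDH P Q hPc hPd hQc hQd
    set W : Set (ℕ → X) := h '' ((fun y => y 0) ⁻¹' U) with hWdef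
    have hWo : IsOpen W := h.isOpenMap _ (hUo.preimage (continuous_apply 0))
    have hWne : W.Nonempty := by
      obtain ⟨u, hu⟩ := hUne
      exact ⟨h (fun _ => u), Set.mem_image_of_mem _ (by simpa using hu)⟩
    have hWsub : W ⊆ ⋃ n, h '' G n := by
      rintro w ⟨y, hy, rfl⟩
      have hy' : y 0 ∈ U := hy
      have : ∃ n, y 0 ∉ g n := by
        by_contra hc
        push_neg at hc
        have hmem : y 0 ∈ ⋂ n, f n := Set.mem_iInter.mpr fun n => hgf n (hc n)
        have : y 0 ∈ U ∩ ⋂ n, f n := ⟨hy', hmem⟩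
        rw [hUdisj] at this
        exact this
      obtain ⟨n, hn⟩ := this
      exact Set.mem_iUnion.mpr ⟨n, Set.mem_image_of_mem _ hn⟩
    have hQG : ∀ n, (Q ∩ h '' G n).Finite := by
      intro n
      rw [← hh, ← Set.image_inter h.injective]
      exact (hPG n).image h
    -- find a basis element inside W
    obtain ⟨w, hw⟩ := hWne
    obtain ⟨t, htb, hwt, htW⟩ := hbb.exists_subset_of_mem_open hw hWo
    obtain ⟨m, rfl⟩ : ∃ m, e m = t := by
      rw [he] at htb
      obtain ⟨m, hm⟩ := htb
      exact ⟨m, hm⟩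
    -- Baire category inside the compact set K
    set K : Set (ℕ → X) := cdhK (Ic m) (xc m) a₀ a₁ with hKdef
    have hKcompact : IsCompact K := cdhK_compact _ _ _ _
    have hKne : K.Nonempty := ⟨cdhQ (Ic m) (xc m) a₀ a₁ ∅, cdhQ_mem_K _ _ _ _ _⟩
    haveI : CompactSpace K := isCompact_iff_compactSpace.mp hKcompact
    haveI : Nonempty K := hKne.to_subtype
    have hcover : (⋃ n, (Subtype.val ⁻¹' (h '' G n) : Set K)) = Set.univ := by
      apply Set.eq_univ_iff_forall.mpr
      intro z
      have hzW : (z : ℕ → X) ∈ W := htW (hKsub m z.2)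
      obtain ⟨n, hn⟩ := Set.mem_iUnion.mp (hWsub hzW)
      exact Set.mem_iUnion.mpr ⟨n, hn⟩
    obtain ⟨n, zz, hzz⟩ := nonempty_interior_of_iUnion_of_closed
      (f := fun n => (Subtype.val ⁻¹' (h '' G n) : Set K))
      (fun n => ((h.isClosedMap _ (hGc n))).preimage continuous_subtype_val)
      hcover
    -- extract an ambient open set
    rw [mem_interior_iff_mem_nhds, nhds_subtype_eq_comap, Filter.mem_comap] at hzz
    obtain ⟨t', ht', ht'sub⟩ := hzz
    obtain ⟨O, hOsub, hOo, hzO⟩ := mem_nhds_iff.mp ht'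
    have hOK : O ∩ K ⊆ h '' G n := by
      rintro y ⟨hyO, hyK⟩
      exact ht'sub (Set.mem_preimage.mpr (hOsub hyO) : (⟨y, hyK⟩ : K) ∈ _)
    -- contradiction with the infinite lemma
    have hinf : (O ∩ Set.range (cdhQ (Ic m) (xc m) a₀ a₁)).Infinite :=
      cdhQ_infinite hne (Ic m) (xc m) hOo hzO zz.2
    have hsubQ : O ∩ Set.range (cdhQ (Ic m) (xc m) a₀ a₁) ⊆ Q ∩ h '' G n := by
      rintro y ⟨hyO, ⟨s, rfl⟩⟩
      refine ⟨Set.mem_iUnion.mpr ⟨m, Set.mem_range_self _⟩, ?_⟩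
      exact hOK ⟨hyO, cdhQ_mem_K _ _ _ _ s⟩
    exact (hinf.mono hsubQ) (hQG n)
end

section
/- Let X be a topological space that is not a Baire space. Then the countable power X^ℕ, with the product topology, is meager in itself. -/
/-!
If `X` is not Baire, some nonempty open set `W ⊆ X` is meagre. A point of `X^ℕ` either has a
coordinate in `W`, and so lies in one of the countably many meagre sets `eval n ⁻¹' W`, or avoids
`W` in every coordinate. The latter set is closed, and it has empty interior because a basic open
set constrains only finitely many coordinates, so a free coordinate can be moved into `W`.
-/

open Set Filter Function

theorem exists_isOpen_isMeagre_of_not_baireSpace {X : Type*} [TopologicalSpace X]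
    (hX : ¬ BaireSpace X) : ∃ W : Set X, IsOpen W ∧ W.Nonempty ∧ IsMeagre W := by
  obtain ⟨U, hUo, hUd, hU⟩ : ∃ U : ℕ → Set X, (∀ n, IsOpen (U n)) ∧ (∀ n, Dense (U n)) ∧
      ¬ Dense (⋂ n, U n) := by
    by_contra! h
    exact hX ⟨h⟩
  refine ⟨(closure (⋂ n, U n))ᶜ, isClosed_closure.isOpen_compl,
    nonempty_compl.mpr (dense_iff_closure_eq.not.mp hU), ?_⟩
  have hres : ⋂ n, U n ∈ residual X :=
    countable_iInter_mem.mpr fun n => residual_of_dense_open (hUo n) (hUd n)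
  simpa [IsMeagre] using mem_of_superset hres subset_closure

theorem isNowhereDense_pi_compl {ι : Type*} [Infinite ι] {X : ι → Type*}
    [∀ i, TopologicalSpace (X i)] {W : ∀ i, Set (X i)} (hWo : ∀ i, IsOpen (W i))
    (hWne : ∀ i, (W i).Nonempty) : IsNowhereDense (univ.pi fun i => (W i)ᶜ) := by
  classical
  rw [(isClosed_set_pi fun i _ => (hWo i).isClosed_compl).isNowhereDense_iff,
    eq_empty_iff_forall_notMem]
  intro g hg
  obtain ⟨I, u, hu, hIu⟩ := isOpen_pi_iff.mp isOpen_interior g hg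
  obtain ⟨n, hn⟩ := Infinite.exists_notMem_finset I
  obtain ⟨w, hw⟩ := hWne n
  have hmem : update g n w ∈ (I : Set ι).pi u := fun i hi => by
    rw [update_of_ne (ne_of_mem_of_not_mem hi hn)]
    exact (hu i hi).2
  exact interior_subset (hIu hmem) n (mem_univ n) (by simpa using hw)

/-- If `X` is not a Baire space, then the countable power `X^ℕ` is meager in itself. -/
theorem pow_meagre_of_not_baire
    (X : Type*) [TopologicalSpace X] (hX : ¬ BaireSpace X) :
    IsMeagre (Set.univ : Set (ℕ → X)) := by
  obtain ⟨W, hWo, hWne, hWm⟩ := exists_isOpen_isMeagre_of_not_baireSpace hX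
  have hcover : (univ : Set (ℕ → X)) ⊆ (univ.pi fun _ => Wᶜ) ∪ ⋃ n, eval n ⁻¹' W := by
    intro g _
    by_cases h : ∃ n, g n ∈ W
    · exact Or.inr (mem_iUnion.mpr h)
    · exact Or.inl fun n _ hn => h ⟨n, hn⟩
  refine IsMeagre.mono hcover (IsMeagre.union ?_ ?_)
  · exact (isNowhereDense_pi_compl (fun _ => hWo) fun _ => hWne).isMeagre
  · exact isMeagre_iUnion fun n =>
      hWm.preimage_of_isOpenMap (continuous_apply n) (isOpenMap_eval n)
end

section
/- Let X be a separable metrizable topological space with at least two points. Then every nonempty open subset of the countable power X^ℕ, with the product topology, contains a subset homeomorphic (in the subspace topology) to the Cantor space 2^ℕ. -/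
/-!
Choose `a ≠ b` in `X`. A nonempty open set of `X^ℕ` contains a cylinder: all sequences agreeing
with a fixed `f` below some `N`. Keeping that prefix and writing, from position `N` on, the
image of a Boolean sequence under `true ↦ a`, `false ↦ b` is a continuous injection of the
compact Cantor space into that cylinder; as `X^ℕ` is Hausdorff, it is a homeomorphism onto
its image.
-/

open Function Topology PiNat

section Prepend

variable {X : Type*}

def prependPrefix (f : ℕ → X) (N : ℕ) (h : ℕ → X) : ℕ → X :=
  fun n => if n < N then f n else h (n - N)

variable (f : ℕ → X) (N : ℕ)

theorem prependPrefix_mem_cylinder (h : ℕ → X) : prependPrefix f N h ∈ cylinder f N :=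
  fun _ hn => if_pos hn

theorem prependPrefix_injective : Injective (prependPrefix f N) := by
  intro h h' hh
  funext k
  simpa [prependPrefix] using congrFun hh (k + N)

theorem continuous_prependPrefix [TopologicalSpace X] : Continuous (prependPrefix f N) := by
  refine continuous_pi fun n => ?_
  by_cases hn : n < N
  · simpa [prependPrefix, hn] using continuous_const
  · simpa [prependPrefix, hn] using continuous_apply (n - N)

end Prepend

theorem exists_cylinder_subset_of_isOpen {X : Type*} [TopologicalSpace X] {U : Set (ℕ → X)}
    (hU : IsOpen U) {f : ℕ → X} (hf : f ∈ U) : ∃ N, cylinder f N ⊆ U := by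
  obtain ⟨I, u, hu, hIu⟩ := isOpen_pi_iff.mp hU f hf
  obtain ⟨N, hIN⟩ := I.exists_nat_subset_range
  refine ⟨N, fun g hg => hIu fun i hi => ?_⟩
  rw [mem_cylinder_iff.mp hg i (Finset.mem_range.mp (hIN hi))]
  exact (hu i hi).2

theorem exists_isClosedEmbedding_cantor_subset_cylinder {X : Type*} [TopologicalSpace X]
    [T2Space X] {a b : X} (hab : a ≠ b) (f : ℕ → X) (N : ℕ) :
    ∃ φ : (ℕ → Bool) → ℕ → X, IsClosedEmbedding φ ∧ Set.range φ ⊆ cylinder f N := by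
  let c : Bool → X := fun t => bif t then a else b
  have hc : Injective c := Bool.injective_iff.mpr hab.symm
  refine ⟨prependPrefix f N ∘ (c ∘ ·), ?_, ?_⟩
  · have hcont := Pi.continuous_postcomp (ι := ℕ) (continuous_of_discreteTopology (f := c))
    exact ((continuous_prependPrefix f N).comp hcont).isClosedEmbedding
      ((prependPrefix_injective f N).comp hc.comp_left)
  · rintro _ ⟨g, rfl⟩
    exact prependPrefix_mem_cylinder f N _

theorem cantor_in_open_of_pow_general
    (X : Type*) [TopologicalSpace X] [TopologicalSpace.MetrizableSpace X]
    [Nontrivial X] :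
    ∀ U : Set (ℕ → X), IsOpen U → U.Nonempty →
      ∃ C : Set (ℕ → X), C ⊆ U ∧ Nonempty (↥C ≃ₜ (ℕ → Bool)) := by
  intro U hU ⟨f, hf⟩
  obtain ⟨a, b, hab⟩ := exists_pair_ne X
  obtain ⟨N, hN⟩ := exists_cylinder_subset_of_isOpen hU hf
  obtain ⟨φ, hφ, hφN⟩ := exists_isClosedEmbedding_cantor_subset_cylinder hab f N
  exact ⟨Set.range φ, hφN.trans hN, ⟨hφ.toHomeomorph.symm⟩⟩

/-- If `X` is separable metrizable with at least two points, then every nonempty open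
subset of `X^ℕ` contains a homeomorphic copy of the Cantor space. -/
theorem cantor_in_open_of_pow
    (X : Type*) [TopologicalSpace X] [TopologicalSpace.MetrizableSpace X]
    [TopologicalSpace.SeparableSpace X] [Nontrivial X] :
    ∀ U : Set (ℕ → X), IsOpen U → U.Nonempty →
      ∃ C : Set (ℕ → X), C ⊆ U ∧ Nonempty (↥C ≃ₜ (ℕ → Bool)) :=
  cantor_in_open_of_pow_general X
end

section
/- For every infinite cardinal κ with κ ≤ 𝔠 (the cardinality of the continuum), there exists a countable dense subset C of the product space 2^κ = Bool^I (where I is an index set of cardinality κ, with the product topology) such that every point c ∈ C is the limit of some sequence of points of C ∖ {c}. -/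
/-!
Embed `I` into `ℝ`. Restriction along the embedding maps `ℝ → Bool` continuously onto `I → Bool`,
and indicators of finite unions of rational intervals are dense in `ℝ → Bool`: around finitely
many prescribed reals one can choose rational intervals isolating each of them. So `I → Bool` has
a countable dense set `D`. Fix distinct points `e 0, e 1, …` of `I` and close `D` under flipping
the coordinate `e n`; this keeps it countable, and flipping a point at `e n` gives a sequence of
other points converging to it, since each coordinate
is changed by at most one of these flips.
-/

open Filter Topology TopologicalSpace Set

theorem dense_of_forall_exists_eqOn_finset {ι : Type*} {X : ι → Type*}
    [∀ i, TopologicalSpace (X i)] {D : Set (∀ i, X i)}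
    (h : ∀ (x : ∀ i, X i) (F : Finset ι), ∃ y ∈ D, ∀ i ∈ F, y i = x i) : Dense D := by
  refine dense_iff_inter_open.2 fun U hU ⟨x, hx⟩ => ?_
  obtain ⟨F, u, hu, hFU⟩ := isOpen_pi_iff.1 hU x hx
  obtain ⟨y, hyD, hyx⟩ := h x F
  exact ⟨y, hFU fun i hi => hyx i hi ▸ (hu i hi).2, hyD⟩

instance separableSpace_pi_bool (X : Type*) [TopologicalSpace X] [SecondCountableTopology X]
    [T1Space X] : SeparableSpace (X → Bool) := by
  classical
  obtain ⟨b, hbc, -, hb⟩ := exists_countable_basis X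
  have : Countable b := hbc.to_subtype
  refine SeparableSpace.of_denseRange
    (fun s : Finset b => fun p => decide (∃ B ∈ s, p ∈ (B : Set X)))
    (dense_of_forall_exists_eqOn_finset fun x F => ?_)
  have isolate : ∀ p : X, ∃ B ∈ b, p ∈ B ∧ B ⊆ ((F : Set X) \ {p})ᶜ := fun p =>
    hb.exists_subset_of_mem_open (by simp) (F.finite_toSet.sdiff).isClosed.isOpen_compl
  choose B hBb hpB hBF using isolate
  refine ⟨_, ⟨(F.filter (x · = true)).image fun p => ⟨B p, hBb p⟩, rfl⟩, fun q hq => ?_⟩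
  simp only [Finset.exists_mem_image, Finset.mem_filter]
  cases hxq : x q
  · simp only [decide_eq_false_iff_not]
    rintro ⟨p, ⟨hp, hxp⟩, hqB⟩
    obtain rfl : q = p := by_contra fun hne => hBF p hqB ⟨hq, hne⟩
    exact Bool.false_ne_true (hxq.symm.trans hxp)
  · exact decide_eq_true ⟨q, ⟨hq, hxq⟩, hpB q⟩

theorem separableSpace_pi_of_injective {I X Y : Type*} [TopologicalSpace Y] [Nonempty Y]
    [SeparableSpace (X → Y)] {g : I → X} (hg : Function.Injective g) :
    SeparableSpace (I → Y) :=
  hg.surjective_comp_right.denseRange.separableSpace (continuous_pi fun i => continuous_apply (g i))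

theorem tendsto_update_nhds_self {ι : Type*} {X : ι → Type*} [∀ i, TopologicalSpace (X i)]
    [DecidableEq ι] {α : Type*} {l : Filter α} {e : α → ι} (he : Tendsto e l cofinite)
    (x : ∀ i, X i) (y : ∀ a, X (e a)) :
    Tendsto (fun a => Function.update x (e a) (y a)) l (𝓝 x) :=
  tendsto_pi_nhds.2 fun i => tendsto_const_nhds.congr' <|
    (he.eventually (eventually_cofinite_ne i)).mono fun _ hne =>
      (Function.update_of_ne hne.symm _ _).symm

theorem exists_countable_dense_forall_exists_tendsto {I : Type*} [Infinite I]
    [SeparableSpace (I → Bool)] :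
    ∃ C : Set (I → Bool), C.Countable ∧ Dense C ∧
      ∀ c ∈ C, ∃ f : ℕ → (I → Bool), (∀ n, f n ∈ C \ {c}) ∧ Tendsto f atTop (𝓝 c) := by
  classical
  obtain ⟨D, hDc, hD⟩ := exists_countable_dense (I → Bool)
  set e := Infinite.natEmbedding I
  let flipAt (n : ℕ) (x : I → Bool) : I → Bool := Function.update x (e n) (!x (e n))
  let flips (l : List ℕ) (x : I → Bool) : I → Bool := l.foldr flipAt x
  refine ⟨⋃ l, flips l '' D, countable_iUnion fun l => hDc.image _,
    hD.mono (subset_iUnion_of_subset [] (by simp [flips])), ?_⟩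
  rintro _ ⟨_, ⟨l, rfl⟩, d, hd, rfl⟩
  refine ⟨fun n => flipAt n (flips l d), fun n => ⟨mem_iUnion.2 ⟨n :: l, d, hd, rfl⟩, ?_⟩,
    tendsto_update_nhds_self (Nat.cofinite_eq_atTop ▸ e.injective.tendsto_cofinite) _ _⟩
  exact Function.update_eq_self_iff.not.2 (Bool.not_ne_self _)

/-- For every index set `I` of infinite cardinality at most continuum, there is a
countable dense subset `C` of `2^I` each of whose points is a limit of a sequence of
other points of `C`. -/
theorem exists_countable_dense_sequentially_selfconverging
    (I : Type) (h1 : Cardinal.aleph0 ≤ Cardinal.mk I)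
    (h2 : Cardinal.mk I ≤ Cardinal.continuum) :
    ∃ C : Set (I → Bool), C.Countable ∧ Dense C ∧
      ∀ c ∈ C, ∃ f : ℕ → (I → Bool), (∀ n, f n ∈ C \ {c}) ∧ Tendsto f atTop (nhds c) := by
  have : Infinite I := Cardinal.infinite_iff.2 h1
  obtain ⟨g⟩ : Nonempty (I ↪ ℝ) := by rwa [← Cardinal.mk_real, Cardinal.le_def] at h2
  have : SeparableSpace (I → Bool) := separableSpace_pi_of_injective g.injective
  exact exists_countable_dense_forall_exists_tendsto
end

section
/- The product space 2^𝔭 = Bool^I, where I is an index set of cardinality 𝔭 and the space carries the product topology, is not countable dense homogeneous. -/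
/-- The pseudo-intersection number `𝔭`: the minimal cardinality of a centered family of
infinite subsets of `ℕ` with no infinite pseudo-intersection. -/
noncomputable def pseudoIntersectionNumber : Cardinal :=
  sInf {c : Cardinal |
    ∃ F : Set (Set ℕ), Cardinal.mk F = c ∧
      (∀ A ∈ F, A.Infinite) ∧
      (∀ G : Finset (Set ℕ), ↑G ⊆ F → G.Nonempty → (⋂ A ∈ G, A).Infinite) ∧
      ¬ ∃ A : Set ℕ, A.Infinite ∧ ∀ B ∈ F, (A \ B).Finite}

/-!
Take a centered family `F` of size `𝔭` without infinite pseudo-intersection and add the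
cofinite sets `{i}ᶜ`; the family keeps its size. A point `(a, s, T)` of the countable set
`ℕ × Finset ℕ × Finset (Finset ℕ)` is put in `traceSet A` when `a ∈ A` and the trace of `A`
on `s` is one of the codes in `T`. Since finitely many distinct sets are separated by their
traces on a finite set, the sets `traceSet A` are independent, so their characteristic
functions give a countable dense set `E` in `2^𝔭`. A sequence in `E` converging to the constant
point `true` would be eventually in every `traceSet A`, and its first coordinates would form an
infinite pseudo-intersection of `F`. On the other hand `2^𝔭` has a countable dense set `D` each
point of which is the limit of a sequence of other points of `D` (change one of countably many
coordinates), and a homeomorphism taking `E ∪ {true}` onto `D` would pull such a sequence back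
into `E`.
-/

open Filter Set Function Topology TopologicalSpace
open scoped symmDiff

theorem IsCDH.mem_seqClosure {X : Type*} [TopologicalSpace X] (hX : IsCDH X) {D E : Set X}
    (hDc : D.Countable) (hDd : Dense D) (hD : ∀ y ∈ D, y ∈ seqClosure (D \ {y}))
    (hEc : E.Countable) (hEd : Dense E) (p : X) : p ∈ seqClosure E := by
  obtain ⟨h, hh⟩ := hX (insert p E) D (hEc.insert p) (hEd.mono (subset_insert p E)) hDc hDd
  obtain ⟨u, huD, hu⟩ := hD (h p) (hh ▸ mem_image_of_mem h (mem_insert p E))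
  refine ⟨h.symm ∘ u, fun k => ?_, by simpa using (h.symm.continuous.tendsto _).comp hu⟩
  obtain ⟨x, hx, hxu⟩ : u k ∈ h '' insert p E := hh ▸ (huD k).1
  rcases hx with rfl | hx
  · exact absurd hxu.symm (huD k).2
  · rwa [comp_apply, ← hxu, h.symm_apply_apply]

theorem Set.Finite.countable_setOf_eqOn_compl {I X : Type*} [Countable X] {s : Set I}
    (hs : s.Finite) (e : I → X) : {x : I → X | EqOn x e sᶜ}.Countable := by
  have := hs.to_subtype
  refine (mapsTo_univ (fun x (a : s) => x a) _).countable_of_injOn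
    (fun x hx y hy hxy => funext fun a => ?_) countable_univ
  by_cases ha : a ∈ s
  · exact congrFun hxy ⟨a, ha⟩
  · exact (hx ha).trans (hy ha).symm

section Pi

variable {I X : Type*} [TopologicalSpace X]

theorem tendsto_update_nhds [DecidableEq I] {ι : ℕ → I} (hι : Injective ι) (y : I → X)
    (z : ℕ → X) : Tendsto (fun k => update y (ι k) (z k)) atTop (𝓝 y) := by
  refine tendsto_pi_nhds.2 fun a => tendsto_const_nhds.congr' ?_
  have : ∀ᶠ k in atTop, ι k ≠ a := by
    rw [← Nat.cofinite_eq_atTop]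
    exact hι.tendsto_cofinite.eventually (eventually_cofinite_ne a)
  exact this.mono fun k hk => (update_of_ne hk.symm _ _).symm

theorem exists_countable_dense_forall_mem_seqClosure_diff [Infinite I] [Countable X]
    [Nontrivial X] [SeparableSpace (I → X)] :
    ∃ D : Set (I → X), D.Countable ∧ Dense D ∧ ∀ y ∈ D, y ∈ seqClosure (D \ {y}) := by
  classical
  obtain ⟨E, hEc, hEd⟩ := exists_countable_dense (I → X)
  let ι := Infinite.natEmbedding I
  set D := ⋃ e ∈ E, ⋃ u : Finset ℕ, {x | EqOn x e (ι '' u)ᶜ}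
  have hmem : ∀ x, x ∈ D ↔ ∃ e ∈ E, ∃ u : Finset ℕ, EqOn x e (ι '' u)ᶜ := by simp [D]
  refine ⟨D, hEc.biUnion fun e _ => countable_iUnion fun u =>
      (u.finite_toSet.image ι).countable_setOf_eqOn_compl e,
    hEd.mono fun e he => (hmem e).2 ⟨e, he, ∅, fun _ _ => rfl⟩, fun y hyD => ?_⟩
  obtain ⟨e, he, u, hy⟩ := (hmem y).1 hyD
  choose z hz using fun k => exists_ne (y (ι k))
  refine ⟨fun k => update y (ι k) (z k), fun k => ⟨?_, ?_⟩,
    tendsto_update_nhds ι.injective y z⟩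
  · refine (hmem _).2 ⟨e, he, insert k u, fun a ha => ?_⟩
    have hak : a ≠ ι k := fun h => ha ⟨k, by simp, h.symm⟩
    exact (update_of_ne hak _ _).trans (hy fun ⟨j, hj, hja⟩ => ha ⟨j, by simp [hj], hja⟩)
  · exact fun h => hz k (by simpa using congrFun h (ι k))

theorem denseRange_pi_of_forall_finset {N : Type*} [DiscreteTopology X] (e : N → I → X)
    (h : ∀ (t : Finset I) (f : I → X), ∃ n, ∀ i ∈ t, e n i = f i) : DenseRange e := by
  refine dense_iff_inter_open.2 fun U hU ⟨f, hf⟩ => ?_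
  obtain ⟨t, u, htu, hsub⟩ := isOpen_pi_iff.1 hU f hf
  obtain ⟨n, hn⟩ := h t f
  exact ⟨e n, hsub fun i hi => (hn i hi).symm ▸ (htu i hi).2, n, rfl⟩

end Pi

section Trace

variable {α : Type*}

open scoped Classical in
theorem exists_finset_injOn_filter_mem (t : Finset (Set α)) :
    ∃ s : Finset α, InjOn (fun A : Set α => {a ∈ s | a ∈ A}) (t : Set (Set α)) := by
  have : ∀ A B : Set α, ∃ s : Finset α, A ≠ B → ∃ a ∈ s, a ∈ A ∆ B := fun A B => by
    by_cases h : A = B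
    · exact ⟨∅, fun h' => absurd h h'⟩
    · obtain ⟨a, ha⟩ := symmDiff_nonempty.2 h
      exact ⟨{a}, fun _ => ⟨a, Finset.mem_singleton_self a, ha⟩⟩
  choose g hg using this
  refine ⟨(t ×ˢ t).biUnion fun p => g p.1 p.2, fun A hA B hB hAB => by_contra fun hne => ?_⟩
  obtain ⟨a, hag, ha⟩ := hg A B hne
  have has : a ∈ (t ×ˢ t).biUnion fun p => g p.1 p.2 :=
    Finset.mem_biUnion.2 ⟨(A, B), Finset.mem_product.2 ⟨hA, hB⟩, hag⟩
  have := congrArg (a ∈ ·) hAB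
  simp only [Finset.mem_filter, has, true_and, eq_iff_iff] at this
  rw [mem_symmDiff] at ha
  tauto

open scoped Classical in
noncomputable def traceSet (A : Set α) : Set (α × Finset α × Finset (Finset α)) :=
  {x | x.1 ∈ A ∧ {a ∈ x.2.1 | a ∈ A} ∈ x.2.2}

open scoped Classical in
theorem exists_forall_mem_traceSet_iff {t : Finset (Set α)} (ht : (⋂ A ∈ t, A).Nonempty)
    (p : Set α → Prop) : ∃ x, ∀ A ∈ t, x ∈ traceSet A ↔ p A := by
  obtain ⟨s, hs⟩ := exists_finset_injOn_filter_mem t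
  obtain ⟨v, hv⟩ := ht
  refine ⟨(v, s, {A ∈ t | p A}.image fun A => {a ∈ s | a ∈ A}), fun A hA => ?_⟩
  simp only [traceSet, mem_ofPred_eq, mem_iInter₂.1 hv A hA, true_and, Finset.mem_image,
    Finset.mem_filter]
  constructor
  · rintro ⟨B, ⟨hB, hpB⟩, hBA⟩
    exact hs hB hA hBA ▸ hpB
  · exact fun hpA => ⟨A, ⟨hA, hpA⟩, rfl⟩

open scoped Classical in
noncomputable def traceCode {I : Type*} (𝒜 : I → Set α)
    (x : α × Finset α × Finset (Finset α)) : I → Bool :=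
  fun i => decide (x ∈ traceSet (𝒜 i))

theorem denseRange_traceCode {I : Type*} {𝒜 : I → Set α} (h𝒜 : Injective 𝒜)
    (hinter : ∀ t : Finset I, (⋂ i ∈ t, 𝒜 i).Nonempty) : DenseRange (traceCode 𝒜) := by
  classical
  refine denseRange_pi_of_forall_finset _ fun t f => ?_
  obtain ⟨x, hx⟩ := exists_forall_mem_traceSet_iff (t := t.image 𝒜) (by simpa using hinter t)
    fun A => ∃ i, 𝒜 i = A ∧ f i = true
  refine ⟨x, fun i hi => ?_⟩
  have := hx (𝒜 i) (Finset.mem_image_of_mem 𝒜 hi)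
  simp only [h𝒜.eq_iff, exists_eq_left] at this
  simp [traceCode, this]

open scoped Classical in
theorem eventually_fst_mem_of_tendsto_traceCode {I ι : Type*} {l : Filter ι} {𝒜 : I → Set α}
    {x : ι → α × Finset α × Finset (Finset α)}
    (hx : Tendsto (fun k => traceCode 𝒜 (x k)) l (𝓝 fun _ => true)) (i : I) :
    ∀ᶠ k in l, (x k).1 ∈ 𝒜 i := by
  have := tendsto_pi_nhds.1 hx i
  rw [nhds_discrete, tendsto_pure] at this
  exact this.mono fun k hk => (of_decide_eq_true hk).1

end Trace

section PseudoIntersection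

variable {α : Type*}

theorem exists_infinite_pseudoIntersection_of_eventually {F : Set (Set α)} {n : ℕ → α}
    (hne : ∀ a, ∀ᶠ k in atTop, n k ≠ a) (hF : ∀ B ∈ F, ∀ᶠ k in atTop, n k ∈ B) :
    ∃ A : Set α, A.Infinite ∧ ∀ B ∈ F, (A \ B).Finite := by
  refine ⟨range n, fun hfin => ?_, fun B hB => ?_⟩
  · obtain ⟨k, hk⟩ := ((eventually_all_finite hfin).2 fun a _ => hne a).exists
    exact hk (n k) (mem_range_self k) rfl
  · obtain ⟨K, hK⟩ := eventually_atTop.1 (hF B hB)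
    refine ((finite_Iio K).image n).subset ?_
    rintro _ ⟨⟨k, rfl⟩, hkB⟩
    exact ⟨k, not_le.1 fun hk => hkB (hK k hk), rfl⟩

theorem not_exists_infinite_pseudoIntersection_hyperfilter [Infinite α] :
    ¬ ∃ A : Set α, A.Infinite ∧ ∀ B ∈ hyperfilter α, (A \ B).Finite := by
  rintro ⟨_, hA, hdiff⟩
  obtain ⟨t, u, rfl, htu, hcard⟩ := hA.exists_union_disjoint_cardinal_eq_of_infinite
  have hiff : t.Infinite ↔ u.Infinite := by
    simp only [← infinite_coe_iff, Cardinal.infinite_iff, hcard]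
  have ht : t.Infinite := (infinite_union.1 hA).elim id hiff.2
  rcases (hyperfilter α).mem_or_compl_mem t with h | h
  · exact hiff.1 ht ((hdiff t h).subset fun a ha => ⟨Or.inr ha, htu.notMem_of_mem_right ha⟩)
  · exact ht ((hdiff _ h).subset fun a ha => ⟨Or.inl ha, not_not.2 ha⟩)

variable {F : Set (Set α)}
  (hF : ∀ G : Finset (Set α), ↑G ⊆ F → G.Nonempty → (⋂ A ∈ G, A).Infinite)
include hF

theorem infinite_of_mem_generate [Infinite α] {s : Set α} (hs : s ∈ generate F) :
    s.Infinite := by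
  obtain ⟨t, htF, htfin, hts⟩ := mem_generate_iff.1 hs
  refine Set.Infinite.mono hts ?_
  rcases t.eq_empty_or_nonempty with rfl | hne
  · simpa using infinite_univ
  · simpa [sInter_eq_biInter] using hF htfin.toFinset (by simpa) (by simpa)

theorem infinite_of_not_exists_infinite_pseudoIntersection [Infinite α]
    (hno : ¬ ∃ A : Set α, A.Infinite ∧ ∀ B ∈ F, (A \ B).Finite) : F.Infinite := fun hfin =>
  hno ⟨⋂₀ F, infinite_of_mem_generate hF ((sInter_mem hfin).2 fun _ => mem_generate_of_mem),
    fun B hB => by simp [sdiff_eq_empty.2 (sInter_subset_of_mem hB)]⟩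

theorem neBot_generate_union_range_compl_singleton [Infinite α] :
    (generate (F ∪ range fun a : α => {a}ᶜ)).NeBot := by
  rw [generate_union]
  refine NeBot.mono ?_ (inf_le_inf_left _ (le_generate_iff.2 ?_ : cofinite ≤ _))
  · exact inf_neBot_iff.2 fun s hs s' hs' =>
      ((infinite_of_mem_generate hF hs).sdiff hs').nonempty.mono fun _ ha =>
        ⟨ha.1, not_not.1 ha.2⟩
  · rintro _ ⟨a, rfl⟩
    exact (finite_singleton a).compl_mem_cofinite

end PseudoIntersection

theorem Cardinal.mk_union_of_infinite_of_countable {α : Type*} {S T : Set α} (hS : S.Infinite)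
    (hT : T.Countable) : Cardinal.mk ↥(S ∪ T) = Cardinal.mk S :=
  le_antisymm ((Cardinal.mk_union_le S T).trans_eq <| Cardinal.add_eq_left
      (Cardinal.infinite_iff.1 hS.to_subtype)
      ((Cardinal.mk_le_aleph0_iff.2 hT.to_subtype).trans (Cardinal.infinite_iff.1 hS.to_subtype)))
    (Cardinal.mk_le_mk_of_subset subset_union_left)

theorem exists_card_eq_pseudoIntersectionNumber :
    ∃ F : Set (Set ℕ), Cardinal.mk F = pseudoIntersectionNumber ∧
      (∀ A ∈ F, A.Infinite) ∧
      (∀ G : Finset (Set ℕ), ↑G ⊆ F → G.Nonempty → (⋂ A ∈ G, A).Infinite) ∧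
      ¬ ∃ A : Set ℕ, A.Infinite ∧ ∀ B ∈ F, (A \ B).Finite :=
  csInf_mem (s := {c | ∃ F : Set (Set ℕ), Cardinal.mk F = c ∧ _})
    ⟨_, (hyperfilter ℕ : Filter ℕ).sets, rfl, fun _ hA hfin => hfin.notMem_hyperfilter hA,
    fun G hG _ hfin => hfin.notMem_hyperfilter ((Filter.biInter_finset_mem G).2 hG),
    not_exists_infinite_pseudoIntersection_hyperfilter⟩

/-- The product of `𝔭` many copies of the two-point discrete space is not CDH. -/
theorem not_CDH_two_pow_p
    (I : Type) (hI : Cardinal.mk I = pseudoIntersectionNumber) :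
    ¬ IsCDH (I → Bool) := by
  intro hCDH
  obtain ⟨F, hFcard, -, hcent, hno⟩ := exists_card_eq_pseudoIntersectionNumber
  set Fs := F ∪ range fun i : ℕ => ({i}ᶜ : Set ℕ)
  have hFinf := infinite_of_not_exists_infinite_pseudoIntersection hcent hno
  obtain ⟨β⟩ : Nonempty (I ≃ Fs) := Cardinal.eq.1 <| by
    rw [hI, Cardinal.mk_union_of_infinite_of_countable hFinf (countable_range _), hFcard]
  have : Infinite I := β.infinite_iff.2 (hFinf.mono subset_union_left).to_subtype
  have hdense : DenseRange (traceCode (Subtype.val ∘ β)) :=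
    denseRange_traceCode (Subtype.val_injective.comp β.injective) fun t =>
      (neBot_generate_union_range_compl_singleton hcent).nonempty_of_mem
        ((biInter_finset_mem t).2 fun i _ => mem_generate_of_mem (β i).2)
  have := hdense.separableSpace'
  obtain ⟨D, hDc, hDd, hD⟩ := exists_countable_dense_forall_mem_seqClosure_diff (I := I) (X := Bool)
  obtain ⟨u, hu, hlim⟩ := hCDH.mem_seqClosure hDc hDd hD (countable_range _) hdense fun _ => true
  choose x hx using hu
  rw [← funext hx] at hlim
  have hev : ∀ A ∈ Fs, ∀ᶠ k in atTop, (x k).1 ∈ A := fun A hA => by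
    simpa using eventually_fst_mem_of_tendsto_traceCode hlim (β.symm ⟨A, hA⟩)
  exact hno (exists_infinite_pseudoIntersection_of_eventually
    (fun i => hev _ (Or.inr ⟨i, rfl⟩)) fun B hB => hev B (Or.inl hB))
end

section
/- Let X be a metrizable topological space, let G ⊆ X be a dense subset that is completely metrizable (Polish) in the subspace topology, and let E ⊆ G be a nonempty countable set that has no isolated points in its subspace topology. Then E is not a Gδ subset of its closure in X. -/
open Set

private theorem isGδ_preimage' {α β : Type*} [TopologicalSpace α] [TopologicalSpace β] {f : α → β}
    (hf : Continuous f) {s : Set β} (hs : IsGδ s) : IsGδ (f ⁻¹' s) := by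
  obtain ⟨T, hTo, hTc, rfl⟩ := hs
  rw [preimage_sInter]
  exact IsGδ.biInter hTc fun t ht => ((hTo t ht).preimage hf).isGδ

private theorem singleton_nowhereDense {α : Type*} [TopologicalSpace α] {x : α}
    (hcl : IsClosed ({x} : Set α)) (h : ¬ IsOpen ({x} : Set α)) :
    IsNowhereDense ({x} : Set α) := by
  rw [hcl.isNowhereDense_iff]
  rcases eq_empty_or_nonempty (interior ({x} : Set α)) with he | hne
  · exact he
  · exfalso
    apply h
    have h1 : interior ({x} : Set α) = {x} := by
      rcases hne with ⟨y, hy⟩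
      have hyx : y ∈ ({x} : Set α) := interior_subset hy
      rw [mem_singleton_iff] at hyx
      subst hyx
      exact subset_antisymm interior_subset (singleton_subset_iff.mpr hy)
    rw [← h1]
    exact isOpen_interior

/-- Let `X` be metrizable, `G ⊆ X` a dense subset which is completely metrizable in the
subspace topology, and `E ⊆ G` a nonempty countable set without isolated points (in its
subspace topology). Then `E` is not a `Gδ` subset of its closure in `X`. -/
theorem countable_crowded_subset_not_Gdelta_in_closure
    (X : Type*) [TopologicalSpace X] [TopologicalSpace.MetrizableSpace X]
    (G : Set X) (hGd : Dense G)
    (hG : ∃ m : MetricSpace ↥G,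
      m.toUniformSpace.toTopologicalSpace = instTopologicalSpaceSubtype ∧
      @CompleteSpace ↥G m.toUniformSpace)
    (E : Set X) (hEG : E ⊆ G) (hEne : E.Nonempty) (hEc : E.Countable)
    (hEiso : ∀ x : ↥E, ¬ IsOpen ({x} : Set ↥E)) :
    ¬ IsGδ (Subtype.val ⁻¹' E : Set ↥(closure E)) := by
  intro hGδ
  -- Step A: `E` is Gδ in `X`.
  have hEGδ : IsGδ E := by
    letI : MetricSpace X := TopologicalSpace.metrizableSpaceMetric X
    obtain ⟨T, hTo, hTc, hTeq⟩ := hGδ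
    have key : ∀ t ∈ T, ∃ u : Set X, IsOpen u ∧ Subtype.val ⁻¹' u = t := by
      intro t ht
      exact isOpen_induced_iff.mp (hTo t ht)
    choose U hUo hUe using key
    have hE_eq : E = closure E ∩ ⋂ t ∈ T, ⋂ (ht : t ∈ T), U t ht := by
      ext x
      constructor
      · intro hx
        refine ⟨subset_closure hx, ?_⟩
        simp only [mem_iInter]
        intro t ht ht'
        have hx' : (⟨x, subset_closure hx⟩ : ↥(closure E)) ∈ ⋂₀ T := by
          rw [← hTeq]; exact hx
        have := hx' t ht'
        rw [← hUe t ht'] at this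
        exact this
      · rintro ⟨hxc, hx⟩
        simp only [mem_iInter] at hx
        have : (⟨x, hxc⟩ : ↥(closure E)) ∈ ⋂₀ T := by
          intro t ht
          rw [← hUe t ht]
          exact hx t ht ht
        rw [← hTeq] at this
        exact this
    rw [hE_eq]
    refine IsGδ.inter isClosed_closure.isGδ ?_
    exact IsGδ.biInter hTc fun t ht => IsGδ.iInter fun ht' => (hUo t ht').isGδ
  -- Set up the complete metric on `G`.
  obtain ⟨m, hm, hcomp⟩ := hG
  letI m' : MetricSpace ↥G := m.replaceTopology hm.symm
  have hm'm : m' = m := MetricSpace.replaceTopology_eq m hm.symm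
  haveI : CompleteSpace ↥G := by
    revert hcomp; rw [← hm'm]; exact fun h => h
  -- `E' := E` as a subset of `G`.
  set E' : Set ↥G := Subtype.val ⁻¹' E with hE'def
  have hE'Gδ : IsGδ E' := isGδ_preimage' continuous_subtype_val hEGδ
  set C : Set ↥G := closure E' with hCdef
  haveI : CompleteSpace ↥C := isClosed_closure.completeSpace_coe
  set F : Set ↥C := Subtype.val ⁻¹' E' with hFdef
  have hFGδ : IsGδ F := isGδ_preimage' continuous_subtype_val hE'Gδ
  have himg : Subtype.val '' F = E' := by
    rw [hFdef, Subtype.image_preimage_coe]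
    exact inter_eq_self_of_subset_right subset_closure
  have hFdense : Dense F := by
    intro x
    exact closure_subtype.mpr (by rw [himg]; exact x.2)
  have hFc : F.Countable :=
    ((hEc.preimage Subtype.val_injective).preimage Subtype.val_injective)
  -- nonemptiness
  obtain ⟨x0, hx0⟩ := hEne
  have hx0G : x0 ∈ G := hEG hx0
  have hx0E' : (⟨x0, hx0G⟩ : ↥G) ∈ E' := hx0
  have hx0C : (⟨x0, hx0G⟩ : ↥G) ∈ C := subset_closure hx0E'
  haveI : Nonempty ↥C := ⟨⟨_, hx0C⟩⟩
  -- no singleton of `F` is open in `↥C`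
  have hnotopen : ∀ x : ↥C, x ∈ F → ¬ IsOpen ({x} : Set ↥C) := by
    intro x hxF hopen
    obtain ⟨w, hwopen, hw⟩ := isOpen_induced_iff.mp hopen
    obtain ⟨v, hvopen, hv⟩ := isOpen_induced_iff.mp hwopen
    have hxE : (x : ↥G).1 ∈ E := hxF
    set p : ↥E := ⟨(x : ↥G).1, hxE⟩ with hpdef
    apply hEiso p
    have : ({p} : Set ↥E) = Subtype.val ⁻¹' v := by
      ext q
      simp only [mem_singleton_iff, mem_preimage]
      constructor
      · rintro rfl
        have h1 : x ∈ Subtype.val ⁻¹' w := by rw [hw]; rfl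
        have h2 : (x : ↥G) ∈ Subtype.val ⁻¹' v := by rw [hv]; exact h1
        exact h2
      · intro hq
        have hqG : (q : X) ∈ G := hEG q.2
        have hqE' : (⟨(q : X), hqG⟩ : ↥G) ∈ E' := q.2
        have hqC : (⟨(q : X), hqG⟩ : ↥G) ∈ C := subset_closure hqE'
        have hqw : (⟨(q : X), hqG⟩ : ↥G) ∈ w := by rw [← hv]; exact hq
        have : (⟨⟨(q : X), hqG⟩, hqC⟩ : ↥C) ∈ Subtype.val ⁻¹' w := hqw
        rw [hw] at this
        have hval : ((⟨⟨(q : X), hqG⟩, hqC⟩ : ↥C) : ↥G).1 = ((x : ↥G) : X) := by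
          rw [this]
        exact Subtype.ext hval
    rw [this]
    exact hvopen.preimage continuous_subtype_val
  -- `F` is meagre in `↥C`
  have hFmeagre : IsMeagre F := by
    rw [isMeagre_iff_countable_union_isNowhereDense]
    refine ⟨(fun x => {x}) '' F, ?_, hFc.image _, ?_⟩
    · rintro t ⟨x, hxF, rfl⟩
      exact singleton_nowhereDense isClosed_singleton (hnotopen x hxF)
    · intro x hx
      exact ⟨{x}, ⟨x, hx, rfl⟩, rfl⟩
  -- `F` is residual in `↥C`
  have hFres : F ∈ residual ↥C := residual_of_dense_Gδ hFGδ hFdense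
  have hboth : F ∩ Fᶜ ∈ residual ↥C := Filter.inter_mem hFres hFmeagre
  have := (dense_of_mem_residual hboth).nonempty
  simp at this
end
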